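/- arXiv:math/0509608 — 5 statements merged into one kernel-verified Lean document; each statement's English description precedes it below -/
import Mathlib

section
/- Fix a distance-2 colouring of a graph G. If W = v₁,v₂,…,v_{2t} is a walk in G that is repetitively coloured but not boring, then v_i ≠ v_{t+i} for all i ∈ [t]. -/
open SimpleGraph

/-- `v 0, v 1, …, v (n-1)` is a walk in `G` (consecutive vertices are adjacent). -/
def IsWalkSeq {V : Type} (G : SimpleGraph V) (n : ℕ) (v : ℕ → V) : Prop :=
  ∀ i : ℕ, i + 1 < n → G.Adj (v i) (v (i + 1))

/-- `v 0, …, v (n-1)` is a path in `G` (a walk with pairwise distinct vertices). -/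
def IsPathSeq {V : Type} (G : SimpleGraph V) (n : ℕ) (v : ℕ → V) : Prop :=
  IsWalkSeq G n v ∧ ∀ i < n, ∀ j < n, v i = v j → i = j

/-- The walk `v 0, …, v (2t-1)` is repetitively coloured by `f`. -/
def RepetitivelyColoured {V C : Type} (f : V → C) (t : ℕ) (v : ℕ → V) : Prop :=
  ∀ i < t, f (v i) = f (v (t + i))

/-- The walk `v 0, …, v (2t-1)` is boring. -/
def BoringWalk {V : Type} (t : ℕ) (v : ℕ → V) : Prop :=
  ∀ i < t, v i = v (t + i)

/-- A colouring is nonrepetitive on walks: every repetitively coloured walk is boring. -/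
def WalkNonrepetitive {V C : Type} (G : SimpleGraph V) (f : V → C) : Prop :=
  ∀ (t : ℕ) (v : ℕ → V), IsWalkSeq G (2 * t) v → RepetitivelyColoured f t v → BoringWalk t v

/-- A colouring is nonrepetitive on paths: no (nonempty) path is repetitively coloured. -/
def PathNonrepetitive {V C : Type} (G : SimpleGraph V) (f : V → C) : Prop :=
  ∀ (t : ℕ) (v : ℕ → V), 0 < t → IsPathSeq G (2 * t) v → ¬ RepetitivelyColoured f t v

/-- A distance-2 colouring: distinct vertices at distance at most 2 get distinct colours. -/
def Distance2Coloring {V C : Type} (G : SimpleGraph V) (f : V → C) : Prop :=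
  ∀ u w : V, u ≠ w → (G.Adj u w ∨ ∃ x, G.Adj u x ∧ G.Adj x w) → f u ≠ f w

/-- σ(G): the minimum number of colours in a walk-nonrepetitive colouring of `G`. -/
noncomputable def sigmaNR {V : Type} (G : SimpleGraph V) : ℕ :=
  sInf {k | ∃ f : V → Fin k, WalkNonrepetitive G f}

/-- π(G): the minimum number of colours in a path-nonrepetitive colouring of `G`. -/
noncomputable def piNR {V : Type} (G : SimpleGraph V) : ℕ :=
  sInf {k | ∃ f : V → Fin k, PathNonrepetitive G f}

/-- The square graph `G²`: distinct vertices at distance at most 2 are adjacent. -/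
def squareGraph {V : Type} (G : SimpleGraph V) : SimpleGraph V where
  Adj u w := u ≠ w ∧ (G.Adj u w ∨ ∃ x, G.Adj u x ∧ G.Adj x w)
  symm := by
    constructor
    rintro u w ⟨h1, h2⟩
    refine ⟨h1.symm, ?_⟩
    rcases h2 with h | ⟨x, hx1, hx2⟩
    · exact Or.inl h.symm
    · exact Or.inr ⟨x, hx2.symm, hx1.symm⟩
  loopless := by constructor; rintro u ⟨h, -⟩; exact h rfl

/-- A levelling of `G`: levels of adjacent vertices differ by at most 1. -/
def IsLevelling {V : Type} (G : SimpleGraph V) (lam : V → ℤ) : Prop :=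
  ∀ u w : V, G.Adj u w → |lam u - lam w| ≤ 1

/-- A levelling is shadow-complete if, for every `k`, the `k`-shadow of every connected
component of `G_{λ>k}` induces a clique: if `u` and `w` are on level `k` and each has a
neighbour in the same component of `G_{λ>k}`, then `u = w` or `u` and `w` are adjacent. -/
def ShadowComplete {V : Type} (G : SimpleGraph V) (lam : V → ℤ) : Prop :=
  ∀ (k : ℤ) (u w : V), lam u = k → lam w = k →
    (∃ (x y : {v : V | k < lam v}), G.Adj u x.1 ∧ G.Adj w y.1 ∧
      (G.induce {v : V | k < lam v}).Reachable x y) →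
    u = w ∨ G.Adj u w

/-- The number of distinct vertices of the walk `v 0, …, v (n-1)`. -/
def walkOrder {V : Type} [DecidableEq V] (n : ℕ) (v : ℕ → V) : ℕ :=
  ((Finset.range n).image v).card

/-- `G` has a tree-partition in which every bag has at most `ℓ` vertices:
the vertices are mapped to the nodes of a forest so that the bags (preimages)
have at most `ℓ` vertices each, and adjacent vertices of `G` lie in the same bag
or in bags corresponding to adjacent nodes of the forest. -/
def HasTreePartition {V : Type} (G : SimpleGraph V) (ℓ : ℕ) : Prop :=
  ∃ (B : Type) (F : SimpleGraph B) (b : V → B),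
    F.IsAcyclic ∧
    (∀ u w : V, G.Adj u w → b u = b w ∨ F.Adj (b u) (b w)) ∧
    (∀ x : B, {v : V | b v = x}.ncard ≤ ℓ)

/-- Fix a distance-2 colouring of a graph `G`. If `v 0, …, v (2t-1)` is a walk in `G` that is
repetitively coloured but not boring, then `v i ≠ v (t+i)` for all `i < t`. -/
theorem stmt1 {V C : Type} (G : SimpleGraph V) (f : V → C)
    (hf : Distance2Coloring G f) (t : ℕ) (v : ℕ → V)
    (hw : IsWalkSeq G (2 * t) v) (hr : RepetitivelyColoured f t v)
    (hnb : ¬ BoringWalk t v) :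
    ∀ i < t, v i ≠ v (t + i) := by
  intro i hi hvi
  apply hnb
  have step : ∀ j, j + 1 < t → (v j = v (t + j) ↔ v (j + 1) = v (t + (j + 1))) := by
    intro j hj
    constructor
    · intro h
      by_contra hne
      refine hf _ _ hne (Or.inr ⟨v j, (hw j (by omega)).symm, ?_⟩) (hr (j + 1) hj)
      rw [h]
      have := hw (t + j) (by omega)
      simpa [Nat.add_assoc] using this
    · intro h
      by_contra hne
      refine hf _ _ hne (Or.inr ⟨v (j + 1), hw j (by omega), ?_⟩) (hr j (by omega))
      rw [h]
      have := (hw (t + j) (by omega)).symm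
      simpa [Nat.add_assoc] using this
  have main : ∀ j < t, (v j = v (t + j) ↔ v 0 = v (t + 0)) := by
    intro j
    induction j with
    | zero => intro _; rfl
    | succ k ih => intro hk; rw [← step k hk]; exact ih (by omega)
  intro k hk
  rw [main k hk, ← main i hi]
  exact hvi
end

section
/- The n-vertex path P_n satisfies σ(P_n) ≤ 4; that is, every path has a walk-nonrepetitive colouring with 4 colours. -/
open SimpleGraph

namespace NRWord

def Hm : ℕ → ℕ → ℕ
| 0, 0 => 0 | 0, 1 => 1 | 0, 2 => 2 | 0, 3 => 0 | 0, 4 => 3 | 0, 5 => 1 | 0, 6 => 2 | 0, 7 => 3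
| 1, 0 => 0 | 1, 1 => 1 | 1, 2 => 2 | 1, 3 => 0 | 1, 4 => 3 | 1, 5 => 2 | 1, 6 => 1 | 1, 7 => 3
| 2, 0 => 0 | 2, 1 => 1 | 2, 2 => 2 | 2, 3 => 3 | 2, 4 => 1 | 2, 5 => 0 | 2, 6 => 2 | 2, 7 => 3
| 3, 0 => 0 | 3, 1 => 1 | 3, 2 => 3 | 3, 3 => 2 | 3, 4 => 1 | 3, 5 => 0 | 3, 6 => 3 | 3, 7 => 2
| _, _ => 0

lemma Hm_lt : ∀ x < 4, ∀ r < 8, Hm x r < 4 := by decide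

def cw (n : ℕ) : ℕ :=
  if h : n = 0 then 0 else Hm (cw (n / 8)) (n % 8)
decreasing_by exact Nat.div_lt_self (Nat.pos_of_ne_zero h) (by norm_num)

lemma cw_zero : cw 0 = 0 := by rw [cw]; norm_num

lemma crec (j r : ℕ) (hr : r < 8) : cw (8 * j + r) = Hm (cw j) r := by
  by_cases h : 8 * j + r = 0
  · have hj : j = 0 := by omega
    have hr0 : r = 0 := by omega
    subst hj; subst hr0
    norm_num [cw_zero]
    rfl
  · rw [cw, dif_neg h]
    congr 1
    · congr 1
      omega
    · omega

lemma cw_lt (n : ℕ) : cw n < 4 := by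
  induction n using Nat.strong_induction_on with
  | _ n IH =>
    rw [cw]
    split
    · norm_num
    · exact Hm_lt _ (IH (n / 8) (Nat.div_lt_self (Nat.pos_of_ne_zero (by assumption)) (by norm_num))) _ (Nat.mod_lt _ (by norm_num))

/-- R1 : no two adjacent letters equal. -/
lemma R1 (n : ℕ) : cw n ≠ cw (n + 1) := by
  have hd1 : ∀ x < 4, ∀ r < 7, Hm x r ≠ Hm x (r + 1) := by decide
  have hd2 : ∀ x < 4, ∀ y < 4, Hm x 7 ≠ Hm y 0 := by decide
  set j := n / 8 with hj
  set r := n % 8 with hr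
  have hn : n = 8 * j + r := by omega
  have hr8 : r < 8 := by omega
  by_cases h7 : r < 7
  · have e1 : cw n = Hm (cw j) r := by rw [hn]; exact crec j r hr8
    have e2 : cw (n + 1) = Hm (cw j) (r + 1) := by
      have : n + 1 = 8 * j + (r + 1) := by omega
      rw [this]; exact crec j (r + 1) (by omega)
    rw [e1, e2]; exact hd1 _ (cw_lt j) r h7
  · have hr7 : r = 7 := by omega
    have e1 : cw n = Hm (cw j) 7 := by rw [hn, hr7]; exact crec j 7 (by omega)
    have e2 : cw (n + 1) = Hm (cw (j + 1)) 0 := by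
      have : n + 1 = 8 * (j + 1) + 0 := by omega
      rw [this]; exact crec (j + 1) 0 (by omega)
    rw [e1, e2]; exact hd2 _ (cw_lt j) _ (cw_lt (j + 1))

/-- R2 : no two letters at distance 2 equal. -/
lemma R2 (n : ℕ) : cw n ≠ cw (n + 2) := by
  have hd1 : ∀ x < 4, ∀ r < 6, Hm x r ≠ Hm x (r + 2) := by decide
  have hd2 : ∀ x < 4, ∀ y < 4, Hm x 6 ≠ Hm y 0 := by decide
  have hd3 : ∀ x < 4, ∀ y < 4, Hm x 7 ≠ Hm y 1 := by decide
  set j := n / 8 with hj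
  set r := n % 8 with hr
  have hn : n = 8 * j + r := by omega
  have hr8 : r < 8 := by omega
  have e1 : cw n = Hm (cw j) r := by rw [hn]; exact crec j r hr8
  by_cases h6 : r < 6
  · have e2 : cw (n + 2) = Hm (cw j) (r + 2) := by
      have : n + 2 = 8 * j + (r + 2) := by omega
      rw [this]; exact crec j (r + 2) (by omega)
    rw [e1, e2]; exact hd1 _ (cw_lt j) r h6
  · by_cases h7 : r = 6
    · have e2 : cw (n + 2) = Hm (cw (j + 1)) 0 := by
        have : n + 2 = 8 * (j + 1) + 0 := by omega
        rw [this]; exact crec (j + 1) 0 (by omega)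
      rw [e1, e2, h7]; exact hd2 _ (cw_lt j) _ (cw_lt (j + 1))
    · have hr7 : r = 7 := by omega
      have e2 : cw (n + 2) = Hm (cw (j + 1)) 1 := by
        have : n + 2 = 8 * (j + 1) + 1 := by omega
        rw [this]; exact crec (j + 1) 1 (by omega)
      rw [e1, e2, hr7]; exact hd3 _ (cw_lt j) _ (cw_lt (j + 1))

/-- Three-block window word. -/
def Wf (X Y Z i : ℕ) : ℕ :=
  if i < 8 then Hm X i else if i < 16 then Hm Y (i - 8) else Hm Z (i - 16)

lemma cwW (j r : ℕ) (hr : r < 8) (i : ℕ) (hi : r + i < 24) :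
    cw (8 * j + r + i) = Wf (cw j) (cw (j + 1)) (cw (j + 2)) (r + i) := by
  unfold Wf
  by_cases h1 : r + i < 8
  · rw [if_pos h1]
    have : 8 * j + r + i = 8 * j + (r + i) := by omega
    rw [this]; exact crec j (r + i) h1
  · rw [if_neg h1]
    by_cases h2 : r + i < 16
    · rw [if_pos h2]
      have : 8 * j + r + i = 8 * (j + 1) + (r + i - 8) := by omega
      rw [this]; exact crec (j + 1) (r + i - 8) (by omega)
    · rw [if_neg h2]
      have : 8 * j + r + i = 8 * (j + 2) + (r + i - 16) := by omega
      rw [this]; exact crec (j + 2) (r + i - 16) (by omega)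

set_option synthInstance.maxHeartbeats 1000000 in
set_option synthInstance.maxSize 4000 in
set_option maxHeartbeats 2000000 in
lemma small_sq : ∀ X < 4, ∀ Y < 4, ∀ Z < 4, X ≠ Y → Y ≠ Z → X ≠ Z →
    ∀ r < 8, ∀ p < 9, 3 ≤ p → ∃ i < p, Wf X Y Z (r + i) ≠ Wf X Y Z (r + i + p) := by
  decide

/-- Injectivity of the substitution. -/
lemma Hinj : ∀ x < 4, ∀ y < 4, (∀ s < 8, Hm x s = Hm y s) → x = y := by decide

/-- Suffix (length 3) injectivity. -/
lemma Hsufinj : ∀ x < 4, ∀ y < 4, (∀ s, 5 ≤ s → s < 8 → Hm x s = Hm y s) → x = y := by decide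

/-- Prefix (length 6) injectivity. -/
lemma Hpreinj : ∀ x < 4, ∀ y < 4, (∀ s < 6, Hm x s = Hm y s) → x = y := by decide

/-- the bigram 01 occurs exactly at multiples of 8. -/
lemma zeros01 (n : ℕ) : (cw n = 0 ∧ cw (n + 1) = 1) ↔ n % 8 = 0 := by
  have hd1 : ∀ x < 4, Hm x 0 = 0 ∧ Hm x 1 = 1 := by decide
  have hd2 : ∀ x < 4, ∀ r, 1 ≤ r → r < 7 → ¬(Hm x r = 0 ∧ Hm x (r + 1) = 1) := by decide
  have hd3 : ∀ x < 4, Hm x 7 ≠ 0 := by decide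
  set j := n / 8 with hj
  set r := n % 8 with hr
  have hn : n = 8 * j + r := by omega
  have hr8 : r < 8 := by omega
  have e1 : cw n = Hm (cw j) r := by rw [hn]; exact crec j r hr8
  constructor
  · rintro ⟨h0, h1⟩
    by_contra hne
    have hr1 : 1 ≤ r := by omega
    by_cases h7 : r < 7
    · have e2 : cw (n + 1) = Hm (cw j) (r + 1) := by
        have : n + 1 = 8 * j + (r + 1) := by omega
        rw [this]; exact crec j (r + 1) (by omega)
      exact hd2 _ (cw_lt j) r hr1 h7 ⟨by rw [← e1]; exact h0, by rw [← e2]; exact h1⟩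
    · have hr7 : r = 7 := by omega
      exact hd3 _ (cw_lt j) (by rw [← hr7, ← e1]; exact h0)
  · intro h0
    have hr0 : r = 0 := h0
    have e2 : cw (n + 1) = Hm (cw j) 1 := by
      have : n + 1 = 8 * j + 1 := by omega
      rw [this]; exact crec j 1 (by omega)
    rw [e1, e2, hr0]
    exact hd1 _ (cw_lt j)


/-- The word `cw` is square-free. -/
theorem sf : ∀ p, 1 ≤ p → ∀ a, ∃ k, k < p ∧ cw (a + k) ≠ cw (a + k + p) := by
  intro p
  induction p using Nat.strong_induction_on with
  | _ p IH =>
    intro hp a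
    by_cases hp1 : p = 1
    · subst hp1
      exact ⟨0, by omega, by simpa using R1 a⟩
    by_cases hp2 : p = 2
    · subst hp2
      exact ⟨0, by omega, by simpa using R2 a⟩
    by_cases hp8 : p ≤ 8
    · -- small squares : 3 ≤ p ≤ 8
      have hp3 : 3 ≤ p := by omega
      set j := a / 8 with hj
      set r := a % 8 with hr
      have ha : a = 8 * j + r := by omega
      have hr8 : r < 8 := by omega
      have hXY : cw j ≠ cw (j + 1) := R1 j
      have hYZ : cw (j + 1) ≠ cw (j + 2) := R1 (j + 1)
      have hXZ : cw j ≠ cw (j + 2) := R2 j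
      obtain ⟨i, hip, hne⟩ := small_sq _ (cw_lt j) _ (cw_lt (j + 1)) _ (cw_lt (j + 2))
        hXY hYZ hXZ r hr8 p (by omega) hp3
      refine ⟨i, hip, ?_⟩
      have e1 : cw (a + i) = Wf (cw j) (cw (j + 1)) (cw (j + 2)) (r + i) := by
        have h' : a + i = 8 * j + r + i := by omega
        rw [h']; exact cwW j r hr8 i (by omega)
      have e2 : cw (a + i + p) = Wf (cw j) (cw (j + 1)) (cw (j + 2)) (r + i + p) := by
        have h' : a + i + p = 8 * j + r + (i + p) := by omega
        have h'' : r + i + p = r + (i + p) := by omega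
        rw [h', h'']; exact cwW j r hr8 (i + p) (by omega)
      rw [e1, e2]; exact hne
    · -- descent : p ≥ 9
      have hp9 : 9 ≤ p := by omega
      by_contra hcon
      push_neg at hcon
      have hc : ∀ k, k < p → cw (a + k) = cw (a + k + p) := fun k hk => hcon k hk
      -- 8 divides p
      set x0k := (8 - a % 8) % 8 with hx0k
      have hx0 : (a + x0k) % 8 = 0 := by omega
      have h01 := (zeros01 (a + x0k)).2 hx0
      have hp0 : cw (a + x0k + p) = 0 := by rw [← hc x0k (by omega)]; exact h01.1
      have hp1' : cw (a + x0k + p + 1) = 1 := by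
        have h' := hc (x0k + 1) (by omega)
        have e : a + (x0k + 1) = a + x0k + 1 := by omega
        rw [e] at h'
        have e2 : a + x0k + 1 + p = a + x0k + p + 1 := by omega
        rw [e2] at h'
        rw [← h']; exact h01.2
      have hdv : (a + x0k + p) % 8 = 0 := (zeros01 _).1 ⟨hp0, hp1'⟩
      have hpmod : p % 8 = 0 := by omega
      set q := p / 8 with hqdef
      have hq : p = 8 * q := by omega
      have hq1 : 1 ≤ q := by omega
      have hqp : q < p := by omega
      set m := (a + 7) / 8 with hmdef
      have hm1 : a ≤ 8 * m := by omega
      have hm2 : 8 * m ≤ a + 7 := by omega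
      -- full block equality
      have blockeq : ∀ j, 8 * m ≤ 8 * j → 8 * (j + 1) ≤ a + p → cw j = cw (j + q) := by
        intro j hj1 hj2
        refine Hinj _ (cw_lt j) _ (cw_lt (j + q)) ?_
        intro s hs
        have e1 : cw (8 * j + s) = Hm (cw j) s := crec j s hs
        have e2 : cw (8 * (j + q) + s) = Hm (cw (j + q)) s := crec (j + q) s hs
        have hk : 8 * j + s - a < p := by omega
        have h' := hc (8 * j + s - a) hk
        have ea : a + (8 * j + s - a) = 8 * j + s := by omega
        have eb : a + (8 * j + s - a) + p = 8 * (j + q) + s := by omega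
        rw [eb] at h'
        rw [ea] at h'
        rw [← e1, ← e2, h']
      by_cases hr0 : a % 8 = 0
      · -- aligned case
        have hma : 8 * m = a := by omega
        obtain ⟨k, hk, hne⟩ := IH q hqp hq1 m
        exact hne (blockeq (m + k) (by omega) (by omega))
      · -- unaligned case
        set r := a % 8 with hrdef
        have hr1 : 1 ≤ r := by omega
        have hr7 : r ≤ 7 := by omega
        have hma : 8 * m = a + (8 - r) := by omega
        have fullbk : ∀ k, k + 1 < q → cw (m + k) = cw (m + k + q) := by
          intro k hk
          exact blockeq (m + k) (by omega) (by omega)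
        by_cases hr5 : r ≤ 5
        · -- use suffix injectivity at block m - 1
          obtain ⟨mm, hmm⟩ : ∃ mm, m = mm + 1 := ⟨m - 1, by omega⟩
          have extra : cw mm = cw (mm + q) := by
            refine Hsufinj _ (cw_lt mm) _ (cw_lt (mm + q)) ?_
            intro s hs5 hs8
            have e1 : cw (8 * mm + s) = Hm (cw mm) s := crec mm s hs8
            have e2 : cw (8 * (mm + q) + s) = Hm (cw (mm + q)) s := crec (mm + q) s hs8
            have h' := hc (s - r) (by omega)
            have ea : a + (s - r) = 8 * mm + s := by omega
            have eb : a + (s - r) + p = 8 * (mm + q) + s := by omega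
            rw [eb] at h'
            rw [ea] at h'
            rw [← e1, ← e2, h']
          obtain ⟨k, hk, hne⟩ := IH q hqp hq1 mm
          refine hne ?_
          rcases Nat.eq_zero_or_pos k with hk0 | hkpos
          · subst hk0; simpa using extra
          · have := fullbk (k - 1) (by omega)
            have ea : m + (k - 1) = mm + k := by omega
            rw [ea] at this
            exact this
        · -- use prefix injectivity at block m + q - 1
          have hr6 : 6 ≤ r := by omega
          obtain ⟨qq, hqq⟩ : ∃ qq, q = qq + 1 := ⟨q - 1, by omega⟩
          have extra : cw (m + qq) = cw (m + qq + q) := by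
            refine Hpreinj _ (cw_lt (m + qq)) _ (cw_lt (m + qq + q)) ?_
            intro s hs6
            have hs8 : s < 8 := by omega
            have e1 : cw (8 * (m + qq) + s) = Hm (cw (m + qq)) s := crec (m + qq) s hs8
            have e2 : cw (8 * (m + qq + q) + s) = Hm (cw (m + qq + q)) s := crec (m + qq + q) s hs8
            have h' := hc (p - r + s) (by omega)
            have ea : a + (p - r + s) = 8 * (m + qq) + s := by omega
            have eb : a + (p - r + s) + p = 8 * (m + qq + q) + s := by omega
            rw [eb] at h'
            rw [ea] at h'
            rw [← e1, ← e2, h']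
          obtain ⟨k, hk, hne⟩ := IH q hqp hq1 m
          refine hne ?_
          by_cases hklast : k = qq
          · subst hklast; exact extra
          · exact fullbk k (by omega)


/-- The walk-nonrepetitive 4-colouring of the path. -/
def pcol (n : ℕ) : Fin n → Fin 4 := fun u => ⟨cw u.1, cw_lt _⟩

theorem walkNR (n : ℕ) : WalkNonrepetitive (SimpleGraph.pathGraph n) (pcol n) := by
  intro t
  induction t using Nat.strong_induction_on with
  | _ t IH =>
    intro v hwalk hrep
    set A : ℕ → ℕ := fun i => (v i).1 with hAdef
    have hadj : ∀ i, i + 1 < 2 * t → A (i + 1) = A i + 1 ∨ A i = A (i + 1) + 1 := by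
      intro i hi
      have := hwalk i hi
      rw [SimpleGraph.pathGraph_adj] at this
      rcases this with h | h
      · exact Or.inl h.symm
      · exact Or.inr h.symm
    have hcol : ∀ i, i < t → cw (A i) = cw (A (t + i)) := by
      intro i hi
      have := hrep i hi
      simpa [pcol, Fin.mk.injEq] using this
    have hvext : ∀ i j : ℕ, A i = A j → v i = v j := by
      intro i j h
      exact Fin.ext h
    by_cases ht0 : t = 0
    · intro i hi; omega
    by_cases ht1 : t = 1
    · subst ht1
      exfalso
      have hc := hcol 0 (by omega)
      rcases hadj 0 (by omega) with h | h
      · rw [show (1 : ℕ) + 0 = 0 + 1 from by omega, h] at hc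
        exact R1 _ hc
      · rw [show (1 : ℕ) + 0 = 0 + 1 from by omega] at hc
        rw [h] at hc
        exact R1 _ hc.symm
    have ht2 : 2 ≤ t := by omega
    have hstep2 : ∀ i, i + 2 < 2 * t →
        A (i + 2) = A i ∨ A (i + 2) = A i + 2 ∨ A i = A (i + 2) + 2 := by
      intro i hi
      have h1 := hadj i (by omega)
      have h2 := hadj (i + 1) (by omega)
      rw [show i + 1 + 1 = i + 2 from by omega] at h2
      omega
    have mir : ∀ j, j + 2 < t → (A (j + 2) = A j ↔ A (t + j + 2) = A (t + j)) := by
      intro j hj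
      have c0 : cw (A j) = cw (A (t + j)) := hcol j (by omega)
      have c2 : cw (A (j + 2)) = cw (A (t + j + 2)) := by
        have := hcol (j + 2) (by omega)
        rwa [show t + (j + 2) = t + j + 2 from by omega] at this
      constructor
      · intro h
        have hc2 : cw (A (t + j + 2)) = cw (A (t + j)) := by rw [← c2, h, c0]
        rcases hstep2 (t + j) (by omega) with h' | h' | h'
        · exact h'
        · exfalso; rw [h'] at hc2; exact R2 (A (t + j)) hc2.symm
        · exfalso; rw [h'] at hc2; exact R2 (A (t + j + 2)) hc2
      · intro h
        have hc2 : cw (A (j + 2)) = cw (A j) := by rw [c2, h, ← c0]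
        rcases hstep2 j (by omega) with h' | h' | h'
        · exact h'
        · exfalso; rw [h'] at hc2; exact R2 (A j) hc2.symm
        · exfalso; rw [h'] at hc2; exact R2 (A (j + 2)) hc2
    by_cases hbt : ∃ j, j + 2 < t ∧ A (j + 2) = A j
    · -- excision case
      obtain ⟨j, hj, hA⟩ := hbt
      have ht3 : 3 ≤ t := by omega
      have hA2 : A (t + j + 2) = A (t + j) := (mir j hj).1 hA
      have hvj : v (j + 2) = v j := hvext _ _ hA
      have hvtj : v (t + j + 2) = v (t + j) := hvext _ _ hA2
      set w : ℕ → Fin n :=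
        fun i => v (if i ≤ j then i else if i + 2 ≤ t + j then i + 2 else i + 4) with hw
      have hwle : ∀ i, i ≤ j → w i = v i := by
        intro i h; simp only [hw]; rw [if_pos h]
      have hwmid : ∀ i, j < i → i + 2 ≤ t + j → w i = v (i + 2) := by
        intro i h h'; simp only [hw]; rw [if_neg (by omega), if_pos h']
      have hwhi : ∀ i, j < i → t + j < i + 2 → w i = v (i + 4) := by
        intro i h h'; simp only [hw]; rw [if_neg (by omega), if_neg (by omega)]
      have hwalk' : IsWalkSeq (SimpleGraph.pathGraph n) (2 * (t - 2)) w := by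
        intro i hi
        by_cases h1 : i + 1 ≤ j
        · rw [hwle i (by omega), hwle (i + 1) h1]
          exact hwalk i (by omega)
        · by_cases h2 : i ≤ j
          · have hij : i = j := by omega
            rw [hwle i h2, hwmid (i + 1) (by omega) (by omega)]
            subst hij
            have := hwalk (i + 2) (by omega)
            rw [hvj] at this
            rw [show i + 1 + 2 = i + 2 + 1 from by omega]
            exact this
          · by_cases h3 : i + 1 + 2 ≤ t + j
            · rw [hwmid i (by omega) (by omega), hwmid (i + 1) (by omega) h3]
              rw [show i + 1 + 2 = i + 2 + 1 from by omega]
              exact hwalk (i + 2) (by omega)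
            · by_cases h4 : i + 2 ≤ t + j
              · rw [hwmid i (by omega) h4, hwhi (i + 1) (by omega) (by omega)]
                have he : i + 2 = t + j := by omega
                have := hwalk (t + j + 2) (by omega)
                rw [hvtj] at this
                rw [he, show i + 1 + 4 = t + j + 2 + 1 from by omega]
                exact this
              · rw [hwhi i (by omega) (by omega), hwhi (i + 1) (by omega) (by omega)]
                rw [show i + 1 + 4 = i + 4 + 1 from by omega]
                exact hwalk (i + 4) (by omega)
      have hrep' : RepetitivelyColoured (pcol n) (t - 2) w := by
        intro i hi
        by_cases h1 : i ≤ j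
        · rw [hwle i h1, hwmid (t - 2 + i) (by omega) (by omega)]
          rw [show t - 2 + i + 2 = t + i from by omega]
          exact hrep i (by omega)
        · rw [hwmid i (by omega) (by omega), hwhi (t - 2 + i) (by omega) (by omega)]
          rw [show t - 2 + i + 4 = t + (i + 2) from by omega]
          exact hrep (i + 2) (by omega)
      have hb := IH (t - 2) (by omega) w hwalk' hrep'
      have hvjj : ∀ m, m ≤ j → v m = v (t + m) := by
        intro m hmj
        have := hb m (by omega)
        rw [hwle m hmj, hwmid (t - 2 + m) (by omega) (by omega)] at this
        rwa [show t - 2 + m + 2 = t + m from by omega] at this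
      intro m hm
      by_cases hm1 : m ≤ j
      · exact hvjj m hm1
      · by_cases hm2 : m = j + 1
        · subst hm2
          have hAA : A j = A (t + j) := congrArg Fin.val (hvjj j (by omega))
          have h1 := hadj j (by omega)
          have h2 := hadj (t + j) (by omega)
          have hcc := hcol (j + 1) (by omega)
          rw [show t + (j + 1) = t + j + 1 from by omega] at hcc
          have : A (t + j + 1) = A (j + 1) := by
            rcases h1 with h1 | h1 <;> rcases h2 with h2 | h2
            · omega
            · exfalso
              have e : A (j + 1) = A (t + j + 1) + 2 := by omega
              rw [e] at hcc
              exact R2 _ hcc.symm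
            · exfalso
              have e : A (t + j + 1) = A (j + 1) + 2 := by omega
              rw [e] at hcc
              exact R2 _ hcc
            · omega
          rw [show t + (j + 1) = t + j + 1 from by omega]
          exact hvext _ _ this.symm
        · by_cases hm3 : m = j + 2
          · subst hm3
            rw [hvj, show t + (j + 2) = t + j + 2 from by omega, hvtj]
            exact hvjj j (by omega)
          · have := hb (m - 2) (by omega)
            rw [hwmid (m - 2) (by omega) (by omega),
              hwhi (t - 2 + (m - 2)) (by omega) (by omega)] at this
            rw [show m - 2 + 2 = m from by omega,
              show t - 2 + (m - 2) + 4 = t + m from by omega] at this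
            exact this
    · -- monotone shapes case
      push_neg at hbt
      have hbt2 : ∀ j, j + 2 < t → A (t + j + 2) ≠ A (t + j) := by
        intro j hj h
        exact hbt j hj ((mir j hj).2 h)
      obtain ⟨u, rfl⟩ : ∃ u, t = u + 2 := ⟨t - 2, by omega⟩
      set t := u + 2 with htdef
      obtain ⟨s, hsdef, hs⟩ : ∃ s : ℤ, (A 1 : ℤ) = A 0 + s ∧ (s = 1 ∨ s = -1) := by
        rcases hadj 0 (by omega) with h | h <;>
          rw [show (0 : ℕ) + 1 = 1 from by omega] at h
        · exact ⟨1, by omega, Or.inl rfl⟩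
        · exact ⟨-1, by omega, Or.inr rfl⟩
      obtain ⟨s', hs'def, hs'⟩ : ∃ s' : ℤ, (A (t + 1) : ℤ) = A t + s' ∧ (s' = 1 ∨ s' = -1) := by
        rcases hadj t (by omega) with h | h
        · exact ⟨1, by omega, Or.inl rfl⟩
        · exact ⟨-1, by omega, Or.inr rfl⟩
      obtain ⟨s'', hs''def, hs''⟩ : ∃ s'' : ℤ, (A t : ℤ) = A (u + 1) + s'' ∧ (s'' = 1 ∨ s'' = -1) := by
        rcases hadj (u + 1) (by omega) with h | h <;>
          rw [show u + 1 + 1 = t from by omega] at h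
        · exact ⟨1, by omega, Or.inl rfl⟩
        · exact ⟨-1, by omega, Or.inr rfl⟩
      have dir1 : ∀ i, i + 1 < t → (A (i + 1) : ℤ) = A i + s := by
        intro i
        induction i with
        | zero => intro _; exact hsdef
        | succ i ih =>
          intro h
          have hprev := ih (by omega)
          rcases hadj (i + 1) (by omega) with h' | h' <;>
            rcases hs with hs1 | hs1
          · rw [hs1]; rw [hs1] at hprev; omega
          · exfalso
            refine hbt i (by omega) ?_
            rw [hs1] at hprev
            rw [show i + 2 = i + 1 + 1 from by omega]
            omega
          · exfalso
            refine hbt i (by omega) ?_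
            rw [hs1] at hprev
            rw [show i + 2 = i + 1 + 1 from by omega]
            omega
          · rw [hs1]; rw [hs1] at hprev; omega
      have dir2 : ∀ i, i + 1 < t → (A (t + i + 1) : ℤ) = A (t + i) + s' := by
        intro i
        induction i with
        | zero => intro _; simpa using hs'def
        | succ i ih =>
          intro h
          have hprev := ih (by omega)
          rw [show t + (i + 1) = t + i + 1 from by omega]
          rcases hadj (t + i + 1) (by omega) with h' | h' <;>
            rcases hs' with hs1 | hs1
          · rw [hs1]; rw [hs1] at hprev; omega
          · exfalso
            refine hbt2 i (by omega) ?_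
            rw [hs1] at hprev
            rw [show t + i + 2 = t + i + 1 + 1 from by omega]
            omega
          · exfalso
            refine hbt2 i (by omega) ?_
            rw [hs1] at hprev
            rw [show t + i + 2 = t + i + 1 + 1 from by omega]
            omega
          · rw [hs1]; rw [hs1] at hprev; omega
      have lin1 : ∀ i, i < t → (A i : ℤ) = A 0 + i * s := by
        intro i
        induction i with
        | zero => intro _; simp
        | succ i ih =>
          intro h
          have h1 := dir1 i (by omega)
          have h2 := ih (by omega)
          rw [h1, h2]
          push_cast
          ring
      have lin2 : ∀ i, i < t → (A (t + i) : ℤ) = A t + i * s' := by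
        intro i
        induction i with
        | zero => intro _; simp
        | succ i ih =>
          intro h
          have h1 := dir2 i (by omega)
          have h2 := ih (by omega)
          rw [show t + (i + 1) = t + i + 1 from by omega, h1, h2]
          push_cast
          ring
      have hAt2 : (A t : ℤ) = A 0 + (u + 1) * s + s'' := by
        have h1 := lin1 (u + 1) (by omega)
        rw [hs''def, h1]
        push_cast
        ring
      have hR : ∀ i, i < t → ((A (t + i) : ℤ) ≠ A i + 1) ∧ ((A i : ℤ) ≠ A (t + i) + 1) ∧
          ((A (t + i) : ℤ) ≠ A i + 2) ∧ ((A i : ℤ) ≠ A (t + i) + 2) := by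
        intro i hi
        have hc := hcol i hi
        refine ⟨?_, ?_, ?_, ?_⟩ <;> intro h
        · have e : A (t + i) = A i + 1 := by omega
          rw [e] at hc; exact R1 _ hc
        · have e : A i = A (t + i) + 1 := by omega
          rw [e] at hc; exact R1 _ hc.symm
        · have e : A (t + i) = A i + 2 := by omega
          rw [e] at hc; exact R2 _ hc
        · have e : A i = A (t + i) + 2 := by omega
          rw [e] at hc; exact R2 _ hc.symm
      rcases hs with rfl | rfl <;> rcases hs' with rfl | rfl <;> rcases hs'' with rfl | rfl
      · -- s = 1, s' = 1, s'' = 1 : monotone increasing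
        exfalso
        obtain ⟨k, hk, hne⟩ := sf t (by omega) (A 0)
        refine hne ?_
        have e1 : A k = A 0 + k := by have := lin1 k (by omega); omega
        have e2 : A (t + k) = A 0 + k + t := by
          have := lin2 k (by omega); have := hAt2; omega
        have := hcol k (by omega)
        rwa [e1, e2] at this
      · -- s = 1, s' = 1, s'' = -1 : shift by u
        by_cases hu0 : u = 0
        · -- boring
          intro m hm
          refine hvext _ _ ?_
          have e1 := lin1 m (by omega)
          have e2 := lin2 m (by omega)
          have := hAt2
          omega
        · exfalso
          obtain ⟨k, hk, hne⟩ := sf u (by omega) (A 0)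
          refine hne ?_
          have e1 : A k = A 0 + k := by have := lin1 k (by omega); omega
          have e2 : A (t + k) = A 0 + k + u := by
            have := lin2 k (by omega); have := hAt2; omega
          have := hcol k (by omega)
          rwa [e1, e2] at this
      · -- s = 1, s' = -1, s'' = 1 : δ_i = u + 2 - 2 i
        exfalso
        rcases Nat.even_or_odd u with ⟨x, hx⟩ | ⟨x, hx⟩
        · obtain ⟨-, -, h3, -⟩ := hR x (by omega)
          refine h3 ?_
          have e1 := lin1 x (by omega)
          have e2 := lin2 x (by omega)
          have := hAt2
          omega
        · obtain ⟨h1, -, -, -⟩ := hR (x + 1) (by omega)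
          refine h1 ?_
          have e1 := lin1 (x + 1) (by omega)
          have e2 := lin2 (x + 1) (by omega)
          have := hAt2
          omega
      · -- s = 1, s' = -1, s'' = -1 : δ_i = u - 2 i
        exfalso
        rcases Nat.even_or_odd u with ⟨x, hx⟩ | ⟨x, hx⟩
        · obtain ⟨-, -, -, h4⟩ := hR (x + 1) (by omega)
          refine h4 ?_
          have e1 := lin1 (x + 1) (by omega)
          have e2 := lin2 (x + 1) (by omega)
          have := hAt2
          omega
        · obtain ⟨-, h2, -, -⟩ := hR (x + 1) (by omega)
          refine h2 ?_
          have e1 := lin1 (x + 1) (by omega)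
          have e2 := lin2 (x + 1) (by omega)
          have := hAt2
          omega
      · -- s = -1, s' = 1, s'' = 1 : δ_i = -u + 2 i
        exfalso
        rcases Nat.even_or_odd u with ⟨x, hx⟩ | ⟨x, hx⟩
        · obtain ⟨-, -, h3, -⟩ := hR (x + 1) (by omega)
          refine h3 ?_
          have e1 := lin1 (x + 1) (by omega)
          have e2 := lin2 (x + 1) (by omega)
          have := hAt2
          omega
        · obtain ⟨h1, -, -, -⟩ := hR (x + 1) (by omega)
          refine h1 ?_
          have e1 := lin1 (x + 1) (by omega)
          have e2 := lin2 (x + 1) (by omega)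
          have := hAt2
          omega
      · -- s = -1, s' = 1, s'' = -1 : δ_i = -(u + 2) + 2 i
        exfalso
        rcases Nat.even_or_odd u with ⟨x, hx⟩ | ⟨x, hx⟩
        · obtain ⟨-, -, -, h4⟩ := hR x (by omega)
          refine h4 ?_
          have e1 := lin1 x (by omega)
          have e2 := lin2 x (by omega)
          have := hAt2
          omega
        · obtain ⟨-, h2, -, -⟩ := hR (x + 1) (by omega)
          refine h2 ?_
          have e1 := lin1 (x + 1) (by omega)
          have e2 := lin2 (x + 1) (by omega)
          have := hAt2
          omega
      · -- s = -1, s' = -1, s'' = 1 : shift by -u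
        by_cases hu0 : u = 0
        · intro m hm
          refine hvext _ _ ?_
          have e1 := lin1 m (by omega)
          have e2 := lin2 m (by omega)
          have := hAt2
          omega
        · exfalso
          obtain ⟨k, hk, hne⟩ := sf u (by omega) (A (t + (u + 1)))
          refine hne ?_
          have hb := lin2 (u + 1) (by omega)
          have e1 : A (t + (u + 1 - k)) = A (t + (u + 1)) + k := by
            have := lin2 (u + 1 - k) (by omega); have := hAt2; omega
          have e2 : A (u + 1 - k) = A (t + (u + 1)) + k + u := by
            have := lin1 (u + 1 - k) (by omega); have := hAt2; omega
          have := hcol (u + 1 - k) (by omega)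
          rw [e1, e2] at this
          exact this.symm
      · -- s = -1, s' = -1, s'' = -1 : monotone decreasing
        exfalso
        obtain ⟨k, hk, hne⟩ := sf t (by omega) (A (t + (u + 1)))
        refine hne ?_
        have hb := lin2 (u + 1) (by omega)
        have e1 : A (t + (u + 1 - k)) = A (t + (u + 1)) + k := by
          have := lin2 (u + 1 - k) (by omega); have := hAt2; omega
        have e2 : A (u + 1 - k) = A (t + (u + 1)) + k + t := by
          have := lin1 (u + 1 - k) (by omega); have := hAt2; omega
        have := hcol (u + 1 - k) (by omega)
        rw [e1, e2] at this
        exact this.symm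

end NRWord

/-- The `n`-vertex path satisfies `σ(Pₙ) ≤ 4`. -/
theorem stmt3 (n : ℕ) : sigmaNR (SimpleGraph.pathGraph n) ≤ 4 := by
  apply Nat.sInf_le
  exact ⟨NRWord.pcol n, NRWord.walkNR n⟩
end

section
/- Suppose that in some coloured graph there exists a repetitively coloured non-boring walk. Then, letting k be the minimum order of a repetitively coloured non-boring walk, there exists a repetitively coloured non-boring walk of order k and length at most 2k². -/
open SimpleGraph

private lemma shrink_walk {V C : Type} (G : SimpleGraph V) (f : V → C)
    (t i j : ℕ) (v : ℕ → V) (hij : i < j) (hjt : j < t)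
    (hvi : v i = v j) (hvti : v (t + i) = v (t + j))
    (hw : IsWalkSeq G (2 * t) v) (hr : RepetitivelyColoured f t v)
    (hb : ¬ BoringWalk t v) :
    ∃ (t' : ℕ) (v' : ℕ → V), 0 < t' ∧ t' < t ∧ IsWalkSeq G (2 * t') v' ∧
      RepetitivelyColoured f t' v' ∧ ¬ BoringWalk t' v' ∧
      ∀ m < 2 * t', ∃ p < 2 * t, v' m = v p := by
  by_cases hA : ∃ m < t, (m ≤ i ∨ j < m) ∧ v m ≠ v (t + m)
  · -- Case A: cut out the interval (i, j] from both halves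
    obtain ⟨m₀, hm₀t, hm₀, hne⟩ := hA
    set d := j - i with hd
    set t' := t - d with ht'd
    have hd0 : 0 < d := by omega
    have hit' : i < t' := by omega
    set w : ℕ → V := fun m => if m < t' then (if m ≤ i then v m else v (m + d))
      else (if m - t' ≤ i then v (t + (m - t')) else v (t + (m - t') + d)) with hwdef
    have hwval : ∀ m, m < t' → w m = if m ≤ i then v m else v (m + d) := by
      intro m hm; simp [hwdef, hm]
    have hwval2 : ∀ m, w (t' + m) = if m ≤ i then v (t + m) else v (t + m + d) := by
      intro m
      have h1 : ¬ (t' + m < t') := by omega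
      have h2 : t' + m - t' = m := by omega
      simp only [hwdef, h1, if_false, h2]
    refine ⟨t', w, by omega, by omega, ?_, ?_, ?_, ?_⟩
    · -- walk
      intro m hm
      rcases Nat.lt_or_ge (m + 1) t' with hcase | hcase
      · rw [hwval m (by omega), hwval (m + 1) hcase]
        by_cases h1 : m + 1 ≤ i
        · rw [if_pos (by omega : m ≤ i), if_pos h1]
          exact hw m (by omega)
        · by_cases h2 : m ≤ i
          · have hmi : m = i := by omega
            subst hmi
            rw [if_pos le_rfl, if_neg h1, hvi, show m + 1 + d = j + 1 from by omega]
            exact hw j (by omega)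
          · rw [if_neg h2, if_neg h1, show m + 1 + d = m + d + 1 from by omega]
            exact hw (m + d) (by omega)
      · rcases Nat.lt_or_ge m t' with hm2 | hm2
        · -- m + 1 = t'
          have hmt : m + 1 = t' := by omega
          have hwt' : w (m + 1) = v t := by
            rw [hmt, show t' = t' + 0 from rfl, hwval2 0]
            simp
          rw [hwval m hm2, hwt']
          have hadj := hw (t - 1) (by omega)
          rw [show t - 1 + 1 = t from by omega] at hadj
          by_cases h2 : m ≤ i
          · have hmi : m = i := by omega
            rw [if_pos h2, hmi, hvi, show j = t - 1 from by omega]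
            exact hadj
          · rw [if_neg h2, show m + d = t - 1 from by omega]
            exact hadj
        · obtain ⟨a, rfl⟩ : ∃ a, m = t' + a := ⟨m - t', by omega⟩
          rw [hwval2 a, show t' + a + 1 = t' + (a + 1) from by omega, hwval2 (a + 1)]
          by_cases h1 : a + 1 ≤ i
          · rw [if_pos (by omega : a ≤ i), if_pos h1,
              show t + (a + 1) = t + a + 1 from by omega]
            exact hw (t + a) (by omega)
          · by_cases h2 : a ≤ i
            · have hai : a = i := by omega
              subst hai
              rw [if_pos le_rfl, if_neg h1, hvti,
                show t + (a + 1) + d = (t + j) + 1 from by omega]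
              exact hw (t + j) (by omega)
            · rw [if_neg h2, if_neg h1,
                show t + (a + 1) + d = (t + a + d) + 1 from by omega]
              exact hw (t + a + d) (by omega)
    · -- repetitively coloured
      intro m hm
      rw [hwval m hm, hwval2 m]
      by_cases h1 : m ≤ i
      · rw [if_pos h1, if_pos h1]
        exact hr m (by omega)
      · rw [if_neg h1, if_neg h1, show t + m + d = t + (m + d) from by omega]
        exact hr (m + d) (by omega)
    · -- non-boring
      intro hB
      apply hne
      by_cases h1 : m₀ ≤ i
      · have hh := hB m₀ (by omega)
        rw [hwval m₀ (by omega), hwval2 m₀, if_pos h1, if_pos h1] at hh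
        exact hh
      · have hjm : j < m₀ := hm₀.resolve_left h1
        have hh := hB (m₀ - d) (by omega)
        rw [hwval (m₀ - d) (by omega), hwval2 (m₀ - d), if_neg (by omega), if_neg (by omega),
          show m₀ - d + d = m₀ from by omega,
          show t + (m₀ - d) + d = t + m₀ from by omega] at hh
        exact hh
    · -- subset
      intro m hm
      rcases Nat.lt_or_ge m t' with h1 | h1
      · by_cases h2 : m ≤ i
        · exact ⟨m, by omega, by rw [hwval m h1, if_pos h2]⟩
        · exact ⟨m + d, by omega, by rw [hwval m h1, if_neg h2]⟩
      · obtain ⟨a, rfl⟩ : ∃ a, m = t' + a := ⟨m - t', by omega⟩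
        by_cases h2 : a ≤ i
        · exact ⟨t + a, by omega, by rw [hwval2 a, if_pos h2]⟩
        · exact ⟨t + a + d, by omega, by rw [hwval2 a, if_neg h2]⟩
  · -- Case B: take the inner walk v (i+1) … v j , v (t+i+1) … v (t+j)
    push_neg at hA
    have hii : v i = v (t + i) := hA i (by omega) (Or.inl le_rfl)
    set s := j - i with hs
    set u : ℕ → V := fun m => if m < s then v (i + 1 + m) else v (t + i + 1 + (m - s))
      with hudef
    have hu1 : ∀ m, m < s → u m = v (i + 1 + m) := fun m hm => by simp [hudef, hm]
    have hu2 : ∀ m, u (s + m) = v (t + i + 1 + m) := by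
      intro m
      have h1 : ¬ (s + m < s) := by omega
      have h2 : s + m - s = m := by omega
      simp only [hudef, h1, if_false, h2]
    refine ⟨s, u, by omega, by omega, ?_, ?_, ?_, ?_⟩
    · intro m hm
      rcases Nat.lt_or_ge (m + 1) s with h1 | h1
      · rw [hu1 m (by omega), hu1 (m + 1) h1,
          show i + 1 + (m + 1) = (i + 1 + m) + 1 from by omega]
        exact hw (i + 1 + m) (by omega)
      · rcases Nat.lt_or_ge m s with h2 | h2
        · rw [hu1 m h2, show m + 1 = s + 0 from by omega, hu2 0,
            show i + 1 + m = j from by omega, ← hvi, hii,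
            show t + i + 1 + 0 = (t + i) + 1 from by omega]
          exact hw (t + i) (by omega)
        · obtain ⟨a, rfl⟩ : ∃ a, m = s + a := ⟨m - s, by omega⟩
          rw [hu2 a, show s + a + 1 = s + (a + 1) from by omega, hu2 (a + 1),
            show t + i + 1 + (a + 1) = (t + i + 1 + a) + 1 from by omega]
          exact hw (t + i + 1 + a) (by omega)
    · intro m hm
      rw [hu1 m hm, hu2 m, show t + i + 1 + m = t + (i + 1 + m) from by omega]
      exact hr (i + 1 + m) (by omega)
    · intro hB
      apply hb
      intro m hm
      by_cases h1 : m ≤ i ∨ j < m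
      · exact hA m hm h1
      · push_neg at h1
        have hh := hB (m - i - 1) (by omega)
        rw [hu1 (m - i - 1) (by omega), hu2 (m - i - 1),
          show i + 1 + (m - i - 1) = m from by omega,
          show t + i + 1 + (m - i - 1) = t + m from by omega] at hh
        exact hh
    · intro m hm
      rcases Nat.lt_or_ge m s with h1 | h1
      · exact ⟨i + 1 + m, by omega, by rw [hu1 m h1]⟩
      · obtain ⟨a, rfl⟩ : ∃ a, m = s + a := ⟨m - s, by omega⟩
        exact ⟨t + i + 1 + a, by omega, by rw [hu2 a]⟩

private lemma walkOrder_mono {V : Type} [DecidableEq V] (t t' : ℕ) (v v' : ℕ → V)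
    (h : ∀ m < 2 * t', ∃ p < 2 * t, v' m = v p) :
    walkOrder (2 * t') v' ≤ walkOrder (2 * t) v := by
  apply Finset.card_le_card
  intro x hx
  simp only [Finset.mem_image, Finset.mem_range] at *
  obtain ⟨m, hm, rfl⟩ := hx
  obtain ⟨p, hp, hvp⟩ := h m hm
  exact ⟨p, hp, hvp.symm⟩

/-- If a coloured graph contains a repetitively coloured non-boring walk, then, letting `k` be the
minimum order of such a walk, it contains a repetitively coloured non-boring walk of order `k`
and length at most `2k²`. -/
theorem stmt4 {V C : Type} [DecidableEq V] (G : SimpleGraph V) (f : V → C)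
    (h : ∃ (t : ℕ) (v : ℕ → V), 0 < t ∧ IsWalkSeq G (2 * t) v ∧
      RepetitivelyColoured f t v ∧ ¬ BoringWalk t v) :
    ∃ (t : ℕ) (v : ℕ → V), 0 < t ∧ IsWalkSeq G (2 * t) v ∧
      RepetitivelyColoured f t v ∧ ¬ BoringWalk t v ∧
      walkOrder (2 * t) v =
        sInf {m | ∃ (s : ℕ) (w : ℕ → V), 0 < s ∧ IsWalkSeq G (2 * s) w ∧
          RepetitivelyColoured f s w ∧ ¬ BoringWalk s w ∧ walkOrder (2 * s) w = m} ∧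
      2 * t ≤ 2 * (walkOrder (2 * t) v) ^ 2 := by
  classical
  obtain ⟨t₀, v₀, ht₀, hw₀, hr₀, hb₀⟩ := h
  set S := {m | ∃ (s : ℕ) (w : ℕ → V), 0 < s ∧ IsWalkSeq G (2 * s) w ∧
      RepetitivelyColoured f s w ∧ ¬ BoringWalk s w ∧ walkOrder (2 * s) w = m} with hSdef
  have hSne : S.Nonempty := ⟨_, t₀, v₀, ht₀, hw₀, hr₀, hb₀, rfl⟩
  set k := sInf S with hkdef
  obtain ⟨s₁, w₁, hs₁, hws₁, hrs₁, hbs₁, hos₁⟩ := Nat.sInf_mem hSne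
  set T := {t | ∃ v : ℕ → V, 0 < t ∧ IsWalkSeq G (2 * t) v ∧
      RepetitivelyColoured f t v ∧ ¬ BoringWalk t v ∧ walkOrder (2 * t) v = k} with hTdef
  have hTne : T.Nonempty := ⟨s₁, w₁, hs₁, hws₁, hrs₁, hbs₁, hos₁⟩
  have hTmem := Nat.sInf_mem hTne
  set t := sInf T with htdef
  have hTmin : ∀ t' ∈ T, t ≤ t' := fun t' h' => Nat.sInf_le h'
  obtain ⟨v, ht, hw, hr, hb, hord⟩ := hTmem
  refine ⟨t, v, ht, hw, hr, hb, hord, ?_⟩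
  rw [hord]
  have key : ∀ i j, i < j → j < t → v i = v j → v (t + i) = v (t + j) → False := by
    intro i j hij hjt h1 h2
    obtain ⟨t', v', ht'0, ht't, hw', hr', hb', hsub⟩ :=
      shrink_walk G f t i j v hij hjt h1 h2 hw hr hb
    have hle : walkOrder (2 * t') v' ≤ k := by
      rw [← hord]; exact walkOrder_mono t t' v v' hsub
    have hge : k ≤ walkOrder (2 * t') v' :=
      Nat.sInf_le ⟨t', v', ht'0, hw', hr', hb', rfl⟩
    have hmemT : t' ∈ T := ⟨v', ht'0, hw', hr', hb', le_antisymm hle hge⟩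
    exact absurd (hTmin t' hmemT) (by omega)
  have hinjOn : Set.InjOn (fun i => (v i, v (t + i))) (Finset.range t) := by
    intro a ha b hb' heq
    simp only [Finset.coe_range, Set.mem_Iio] at ha hb'
    have h1 : v a = v b := congrArg Prod.fst heq
    have h2 : v (t + a) = v (t + b) := congrArg Prod.snd heq
    rcases lt_trichotomy a b with hlt | heq' | hgt
    · exact (key a b hlt hb' h1 h2).elim
    · exact heq'
    · exact (key b a hgt ha h1.symm h2.symm).elim
  have hcard1 : ((Finset.range t).image (fun i => (v i, v (t + i)))).card = t := by
    rw [Finset.card_image_of_injOn hinjOn, Finset.card_range]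
  have hsub : (Finset.range t).image (fun i => (v i, v (t + i))) ⊆
      ((Finset.range (2 * t)).image v) ×ˢ ((Finset.range (2 * t)).image v) := by
    intro x hx
    simp only [Finset.mem_image, Finset.mem_range] at hx
    obtain ⟨i, hi, rfl⟩ := hx
    simp only [Finset.mem_product, Finset.mem_image, Finset.mem_range]
    exact ⟨⟨i, by omega, rfl⟩, ⟨t + i, by omega, rfl⟩⟩
  have hc2 := Finset.card_le_card hsub
  rw [hcard1, Finset.card_product] at hc2
  have hWk : ((Finset.range (2 * t)).image v).card = k := hord
  rw [hWk] at hc2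
  rw [pow_two]
  exact Nat.mul_le_mul_left 2 hc2
end

section
/- Every tree T with at least one edge satisfies Δ(T)+1 ≤ σ(T) ≤ 4Δ(T), where Δ(T) is the maximum degree of T. -/
open SimpleGraph

/-- Thue–Morse sequence. -/
def tmW (n : ℕ) : Bool := ((Nat.digits 2 n).count 1) % 2 == 1

lemma tmW_two_mul (n : ℕ) : tmW (2*n) = tmW n := by
  rcases Nat.eq_zero_or_pos n with rfl | hn
  · rfl
  · unfold tmW
    rw [Nat.digits_def' (by norm_num : 1 < 2) (by omega : 0 < 2*n)]
    have h1 : 2*n % 2 = 0 := by omega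
    have h2 : 2*n / 2 = n := by omega
    rw [h1, h2]
    simp [List.count_cons]

lemma tmW_two_mul_add_one (n : ℕ) : tmW (2*n+1) = !(tmW n) := by
  unfold tmW
  rw [Nat.digits_def' (by norm_num : 1 < 2) (by omega : 0 < 2*n+1)]
  have h1 : (2*n+1) % 2 = 1 := by omega
  have h2 : (2*n+1) / 2 = n := by omega
  rw [h1, h2]
  have hc : (1 :: Nat.digits 2 n).count 1 = (Nat.digits 2 n).count 1 + 1 := by
    simp [List.count_cons]
  rw [hc]
  rcases Nat.mod_two_eq_zero_or_one ((Nat.digits 2 n).count 1) with h | h <;>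
    · have h' : ((Nat.digits 2 n).count 1 + 1) % 2 = 1 - (Nat.digits 2 n).count 1 % 2 := by
        omega
      rw [h', h]
      rfl

lemma tmW_flip (m : ℕ) : tmW (2*m+1) = !tmW (2*m) := by
  rw [tmW_two_mul_add_one, tmW_two_mul]

lemma tmW_no_aaa (m : ℕ) : ¬ (tmW m = tmW (m+1) ∧ tmW (m+1) = tmW (m+2)) := by
  rintro ⟨h1, h2⟩
  rcases Nat.even_or_odd m with ⟨c, hc⟩ | ⟨c, hc⟩
  · have := tmW_flip c
    rw [show 2*c = m by omega] at this
    rw [this] at h1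
    simp at h1
  · have := tmW_flip (c+1)
    rw [show 2*(c+1) = m+1 by omega] at this
    rw [this] at h2
    simp at h2

theorem tmW_no_overlap : ∀ q, 1 ≤ q → ∀ p, ¬ (∀ k ≤ q, tmW (p+k) = tmW (p+k+q)) := by
  intro q
  induction q using Nat.strong_induction_on with
  | _ q IH =>
  intro hq p h
  rcases eq_or_lt_of_le hq with hq1 | hq2
  · -- q = 1
    have h0 := h 0 (by omega)
    have h1 := h 1 (by omega)
    rw [← hq1] at h0 h1
    exact tmW_no_aaa p ⟨by simpa using h0, by simpa using h1⟩
  · rcases Nat.even_or_odd q with ⟨r, hr⟩ | ⟨s, hs⟩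
    · -- q = 2r even
      have hr1 : 1 ≤ r := by omega
      rcases Nat.even_or_odd p with ⟨c, hc⟩ | ⟨c, hc⟩
      · refine IH r (by omega) hr1 c (fun k hk => ?_)
        have := h (2*k) (by omega)
        rw [show p + 2*k + q = 2*(c+k+r) by omega, show p + 2*k = 2*(c+k) by omega,
          tmW_two_mul, tmW_two_mul] at this
        exact this
      · refine IH r (by omega) hr1 c (fun k hk => ?_)
        have := h (2*k) (by omega)
        rw [show p + 2*k + q = 2*(c+k+r)+1 by omega, show p + 2*k = 2*(c+k)+1 by omega,
          tmW_two_mul_add_one, tmW_two_mul_add_one] at this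
        simpa using this
    · -- q = 2s+1 odd, q ≥ 3
      have hs1 : 1 ≤ s := by omega
      have halt : ∀ j, p ≤ j → j + 1 ≤ p + 2*q → tmW (j+1) = !(tmW j) := by
        intro j hj1 hj2
        rcases Nat.even_or_odd j with ⟨m, hm⟩ | ⟨m, hm⟩
        · rw [show j + 1 = 2*m+1 by omega, show j = 2*m by omega]; exact tmW_flip m
        · -- j odd
          by_cases hcase : j + 1 ≤ p + q
          · have e1 := h (j - p) (by omega)
            have e2 := h (j + 1 - p) (by omega)
            rw [show p + (j - p) + q = j + q by omega, show p + (j - p) = j by omega] at e1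
            rw [show p + (j+1-p) + q = (j + q) + 1 by omega,
              show p + (j + 1 - p) = j+1 by omega] at e2
            have hf : tmW ((j+q)+1) = !tmW (j+q) := by
              rw [show j + q = 2*(m+s+1) by omega, show 2*(m+s+1)+1 = 2*(m+s+1)+1 from rfl]
              exact tmW_flip (m+s+1)
            rw [e2, hf, ← e1]
          · have e1 := h (j - q - p) (by omega)
            have e2 := h (j - q - p + 1) (by omega)
            rw [show p + (j - q - p) + q = j by omega,
              show p + (j - q - p) = j - q by omega] at e1
            rw [show p + (j - q - p + 1) + q = j + 1 by omega,
              show p + (j - q - p + 1) = (j - q) + 1 by omega] at e2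
            have hf : tmW ((j - q)+1) = !tmW (j - q) := by
              rw [show j - q = 2*(m - s) by omega]
              exact tmW_flip (m - s)
            rw [← e2, hf, ← e1]
      set m := (p+1)/2 with hm
      have b1 := halt (2*m) (by omega) (by omega)
      have b2 := halt (2*m+1) (by omega) (by omega)
      have b3 := halt (2*m+2) (by omega) (by omega)
      have b4 := halt (2*m+3) (by omega) (by omega)
      refine IH 1 (by omega) (by omega) m (fun k hk => ?_)
      interval_cases k
      · -- tmW m = tmW (m+1)
        have : tmW (2*m+2) = tmW (2*m) := by
          rw [show (2*m+1)+1 = 2*m+2 from rfl] at b2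
          rw [b2, b1]; simp
        rw [show 2*m+2 = 2*(m+1) by ring, tmW_two_mul, tmW_two_mul] at this
        simpa using this.symm
      · -- tmW (m+1) = tmW (m+2)
        have : tmW (2*m+4) = tmW (2*m+2) := by
          rw [show (2*m+3)+1 = 2*m+4 from rfl] at b4
          rw [show (2*m+2)+1 = 2*m+3 from rfl] at b3
          rw [b4, b3]; simp
        rw [show 2*m+4 = 2*(m+2) by ring, show 2*m+2 = 2*(m+1) by ring,
          tmW_two_mul, tmW_two_mul] at this
        simpa using this.symm

/-- Squarefree ternary word derived from Thue–Morse. -/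
def uW (n : ℕ) : ℕ :=
  if tmW n then (if tmW (n+1) then 0 else 2) else (if tmW (n+1) then 1 else 0)

lemma uW_lt (n : ℕ) : uW n < 3 := by
  unfold uW; split <;> split <;> omega

lemma uW_L1 {m n : ℕ} (h : uW m = uW n) (h1 : tmW m = tmW n) :
    tmW (m+1) = tmW (n+1) := by
  unfold uW at h
  cases hm : tmW m <;> cases hm1 : tmW (m+1) <;> cases hn : tmW n <;> cases hn1 : tmW (n+1) <;>
    simp_all

lemma uW_L2 {m n : ℕ} (h : uW m = uW n) (h1 : tmW m ≠ tmW n) :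
    tmW (m+1) = tmW m ∧ tmW (n+1) = tmW n := by
  unfold uW at h
  cases hm : tmW m <;> cases hm1 : tmW (m+1) <;> cases hn : tmW n <;> cases hn1 : tmW (n+1) <;>
    simp_all

theorem uW_squarefree (p q : ℕ) (hq : 1 ≤ q) : ¬ ∀ j < q, uW (p+j) = uW (p+q+j) := by
  intro h
  by_cases hc : tmW p = tmW (p+q)
  · refine tmW_no_overlap q hq p (fun k hk => ?_)
    induction k with
    | zero => simpa using hc
    | succ k IHk =>
      have e := h k (by omega)
      rw [show p + q + k = (p + k) + q by omega] at e
      have := uW_L1 e (by simpa using IHk (by omega))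
      rw [show p + k + q + 1 = p + (k+1) + q by omega, show p+k+1 = p + (k+1) by omega] at this
      exact this
  · exfalso
    have key : ∀ k, k ≤ q → tmW (p+k) = tmW p ∧ tmW (p+k+q) = tmW (p+q) := by
      intro k
      induction k with
      | zero => intro _; simp
      | succ k IHk =>
        intro hk
        obtain ⟨ih1, ih2⟩ := IHk (by omega)
        have e := h k (by omega)
        rw [show p + q + k = (p + k) + q by omega] at e
        have hne : tmW (p+k) ≠ tmW ((p+k)+q) := by
          rw [ih1, show p+k+q = p+k+q from rfl, ih2]; exact hc
        obtain ⟨c1, c2⟩ := uW_L2 e hne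
        constructor
        · rw [show p + (k+1) = (p+k)+1 by omega, c1, ih1]
        · rw [show p + (k+1) + q = ((p+k)+q)+1 by omega, c2, ih2]
    have := (key q (le_refl q)).1
    exact hc this.symm

/-- The 4-letter word: marker 3 at positions ≡ 0 mod 3, pairs of `uW` in between. -/
def xwW (n : ℕ) : ℕ :=
  if n % 3 = 0 then 3 else uW (2*(n/3) + (n % 3 - 1))

lemma xwW_lt (n : ℕ) : xwW n < 4 := by
  unfold xwW; split
  · omega
  · have := uW_lt (2*(n/3) + (n % 3 - 1)); omega

lemma xwW_marker {n : ℕ} (h : n % 3 = 0) : xwW n = 3 := by simp [xwW, h]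

lemma xwW_lt3 {n : ℕ} (h : n % 3 ≠ 0) : xwW n < 3 := by
  simp only [xwW, if_neg h]; exact uW_lt _

lemma xwW_1 (m : ℕ) : xwW (3*m+1) = uW (2*m) := by
  have h1 : (3*m+1) % 3 = 1 := by omega
  have h2 : (3*m+1) / 3 = m := by omega
  simp [xwW, h1, h2]

lemma xwW_2 (m : ℕ) : xwW (3*m+2) = uW (2*m+1) := by
  have h1 : (3*m+2) % 3 = 2 := by omega
  have h2 : (3*m+2) / 3 = m := by omega
  simp [xwW, h1, h2]

lemma xwW_succ (n : ℕ) : xwW n ≠ xwW (n+1) := by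
  have hp3 : n % 3 = 0 ∨ n % 3 = 1 ∨ n % 3 = 2 := by omega
  rcases hp3 with h | h | h
  · have := xwW_marker h
    have h2 : (n+1) % 3 ≠ 0 := by omega
    have := xwW_lt3 h2
    omega
  · obtain ⟨m, rfl⟩ : ∃ m, n = 3*m+1 := ⟨n/3, by omega⟩
    rw [xwW_1, show 3*m+1+1 = 3*m+2 from rfl, xwW_2]
    intro heq
    exact uW_squarefree (2*m) 1 (le_refl 1) (fun j hj => by
      interval_cases j; simpa using heq)
  · have h2 : (n+1) % 3 = 0 := by omega
    have := xwW_marker h2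
    have := xwW_lt3 (by omega : n % 3 ≠ 0)
    omega

lemma xwW_succ2 (n : ℕ) : xwW n ≠ xwW (n+2) := by
  have hp3 : n % 3 = 0 ∨ n % 3 = 1 ∨ n % 3 = 2 := by omega
  rcases hp3 with h | h | h
  · have := xwW_marker h
    have := xwW_lt3 (by omega : (n+2) % 3 ≠ 0)
    omega
  · have := xwW_marker (by omega : (n+2) % 3 = 0)
    have := xwW_lt3 (by omega : n % 3 ≠ 0)
    omega
  · obtain ⟨m, rfl⟩ : ∃ m, n = 3*m+2 := ⟨n/3, by omega⟩
    rw [xwW_2, show 3*m+2+2 = 3*(m+1)+1 by ring, xwW_1]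
    intro heq
    exact uW_squarefree (2*m+1) 1 (le_refl 1) (fun j hj => by
      interval_cases j
      simpa [show 2*m+1+1 = 2*(m+1) by ring] using heq)

theorem xwW_squarefree (p q : ℕ) (hq : 1 ≤ q) : ¬ ∀ j < q, xwW (p+j) = xwW (p+q+j) := by
  intro h
  by_cases h3 : q % 3 = 0
  · -- q = 3r
    obtain ⟨r, rfl⟩ : ∃ r, q = 3*r := ⟨q/3, by omega⟩
    have hr : 1 ≤ r := by omega
    have hp3 : p % 3 = 0 ∨ p % 3 = 1 ∨ p % 3 = 2 := by omega
    -- in each case, produce a uW-square of period 2r starting at m0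
    rcases hp3 with hp | hp | hp
    · obtain ⟨c, rfl⟩ : ∃ c, p = 3*c := ⟨p/3, by omega⟩
      refine uW_squarefree (2*c) (2*r) (by omega) (fun i hi => ?_)
      rcases Nat.even_or_odd i with ⟨d, rfl⟩ | ⟨d, rfl⟩
      · have e := h (3*d+1) (by omega)
        rw [show 3*c + (3*d+1) = 3*(c+d)+1 by ring, xwW_1,
          show 3*c + 3*r + (3*d+1) = 3*(c+r+d)+1 by ring, xwW_1] at e
        rw [show 2*c + (d+d) = 2*(c+d) by ring, show 2*c + 2*r + (d+d) = 2*(c+r+d) by ring]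
        exact e
      · have e := h (3*d+2) (by omega)
        rw [show 3*c + (3*d+2) = 3*(c+d)+2 by ring, xwW_2,
          show 3*c + 3*r + (3*d+2) = 3*(c+r+d)+2 by ring, xwW_2] at e
        rw [show 2*c + (2*d+1) = 2*(c+d)+1 by ring,
          show 2*c + 2*r + (2*d+1) = 2*(c+r+d)+1 by ring]
        exact e
    · obtain ⟨c, rfl⟩ : ∃ c, p = 3*c+1 := ⟨p/3, by omega⟩
      refine uW_squarefree (2*c) (2*r) (by omega) (fun i hi => ?_)
      rcases Nat.even_or_odd i with ⟨d, rfl⟩ | ⟨d, rfl⟩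
      · have e := h (3*d) (by omega)
        rw [show 3*c+1 + (3*d) = 3*(c+d)+1 by ring, xwW_1,
          show 3*c+1 + 3*r + (3*d) = 3*(c+r+d)+1 by ring, xwW_1] at e
        rw [show 2*c + (d+d) = 2*(c+d) by ring, show 2*c + 2*r + (d+d) = 2*(c+r+d) by ring]
        exact e
      · have e := h (3*d+1) (by omega)
        rw [show 3*c+1 + (3*d+1) = 3*(c+d)+2 by ring, xwW_2,
          show 3*c+1 + 3*r + (3*d+1) = 3*(c+r+d)+2 by ring, xwW_2] at e
        rw [show 2*c + (2*d+1) = 2*(c+d)+1 by ring,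
          show 2*c + 2*r + (2*d+1) = 2*(c+r+d)+1 by ring]
        exact e
    · obtain ⟨c, rfl⟩ : ∃ c, p = 3*c+2 := ⟨p/3, by omega⟩
      refine uW_squarefree (2*c+1) (2*r) (by omega) (fun i hi => ?_)
      rcases Nat.even_or_odd i with ⟨d, rfl⟩ | ⟨d, rfl⟩
      · have e := h (3*d) (by omega)
        rw [show 3*c+2 + (3*d) = 3*(c+d)+2 by ring, xwW_2,
          show 3*c+2 + 3*r + (3*d) = 3*(c+r+d)+2 by ring, xwW_2] at e
        rw [show 2*c+1 + (d+d) = 2*(c+d)+1 by ring,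
          show 2*c+1 + 2*r + (d+d) = 2*(c+r+d)+1 by ring]
        exact e
      · have e := h (3*d+2) (by omega)
        rw [show 3*c+2 + (3*d+2) = 3*(c+d+1)+1 by ring, xwW_1,
          show 3*c+2 + 3*r + (3*d+2) = 3*(c+r+d+1)+1 by ring, xwW_1] at e
        rw [show 2*c+1 + (2*d+1) = 2*(c+d+1) by ring,
          show 2*c+1 + 2*r + (2*d+1) = 2*(c+r+d+1) by ring]
        exact e
  · by_cases hq3 : 3 ≤ q
    · set j := (3 - p % 3) % 3 with hj
      have hj3 : j < 3 := by omega
      have hpj : (p + j) % 3 = 0 := by omega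
      have hpqj : (p + q + j) % 3 ≠ 0 := by omega
      have e := h j (by omega)
      rw [xwW_marker hpj] at e
      have := xwW_lt3 hpqj
      omega
    · have hq12 : q = 1 ∨ q = 2 := by omega
      rcases hq12 with rfl | rfl
      · have e := h 0 (by omega)
        simp only [Nat.add_zero] at e
        exact xwW_succ p (by rw [show p + 1 + 0 = p + 1 by omega] at e; exact e)
      · have e := h 0 (by omega)
        rw [show p + 2 + 0 = p + 2 by omega, show p + 0 = p by omega] at e
        exact xwW_succ2 p e

lemma xwW_far {a b : ℕ} (h : xwW a = xwW b) (h1 : a ≠ b) (h2 : a ≤ b + 2) (h3 : b ≤ a + 2) :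
    False := by
  have h4 : b = a + 1 ∨ a = b + 1 ∨ b = a + 2 ∨ a = b + 2 := by omega
  rcases h4 with rfl | rfl | rfl | rfl
  · exact xwW_succ a h
  · exact xwW_succ b h.symm
  · exact xwW_succ2 a h
  · exact xwW_succ2 b h.symm

theorem xwW_walk (t : ℕ) : ∀ ℓ : ℕ → ℕ,
    (∀ i, i + 1 < 2*t → (ℓ (i+1) = ℓ i + 1 ∨ ℓ i = ℓ (i+1) + 1)) →
    (∀ i < t, xwW (ℓ i) = xwW (ℓ (t+i))) →
    ∀ i < t, ℓ i = ℓ (t+i) := by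
  induction t using Nat.strong_induction_on with
  | _ t IH =>
  intro ℓ hw hr
  rcases Nat.lt_or_ge t 2 with ht | ht
  · rcases Nat.eq_zero_or_pos t with rfl | h1
    · intro i hi; exact absurd hi (by omega)
    · have ht1 : t = 1 := by omega
      subst ht1
      exfalso
      have e : xwW (ℓ 0) = xwW (ℓ 1) := by simpa using hr 0 (by omega)
      have s' : ℓ 1 = ℓ 0 + 1 ∨ ℓ 0 = ℓ 1 + 1 := by simpa using hw 0 (by omega)
      rcases s' with s | s <;> exact xwW_far e (by omega) (by omega) (by omega)
  · -- t ≥ 2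
    by_cases hA : ∃ i, i + 3 ≤ t ∧ ℓ i = ℓ (i+2)
    · -- backtrack in first half: reduce to t-2
      obtain ⟨i, hi3, hbt⟩ := hA
      have hbt2 : ℓ (t+i) = ℓ (t+i+2) := by
        have c1 := hr i (by omega)
        have c2 := hr (i+2) (by omega)
        rw [show t + (i+2) = t+i+2 by omega] at c2
        rw [hbt] at c1
        have e : xwW (ℓ (t+i)) = xwW (ℓ (t+i+2)) := by rw [← c1, c2]
        by_contra hne
        have s1 := hw (t+i) (by omega)
        have s2 := hw (t+i+1) (by omega)
        rw [show t+i+1+1 = t+i+2 by omega] at s2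
        exact xwW_far e hne (by omega) (by omega)
      set g : ℕ → ℕ := fun j => if j < i then j else if j < t + i - 2 then j + 2 else j + 4
        with hg
      have hgdef : ∀ j, g j = if j < i then j else if j < t + i - 2 then j + 2 else j + 4 :=
        fun j => rfl
      have bor' : ∀ j < t - 2, ℓ (g j) = ℓ (g ((t-2) + j)) := by
        refine IH (t-2) (by omega) (fun j => ℓ (g j)) (fun j hj => ?_) (fun j hj => ?_)
        · -- walk property
          show ℓ (g (j+1)) = ℓ (g j) + 1 ∨ ℓ (g j) = ℓ (g (j+1)) + 1
          by_cases c1 : j + 1 < i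
          · have ea : g j = j := by rw [hgdef]; split_ifs <;> omega
            have eb : g (j+1) = j+1 := by rw [hgdef]; split_ifs <;> omega
            rw [ea, eb]; exact hw j (by omega)
          · by_cases c2 : j + 1 = i
            · have ea : g j = j := by rw [hgdef]; split_ifs <;> omega
              have eb : g (j+1) = j+3 := by rw [hgdef]; split_ifs <;> omega
              rw [ea, eb]
              have h'' := hw j (by omega)
              have hbt' : ℓ (j+1) = ℓ (j+3) := by
                rw [show j+1 = i by omega, show j+3 = i+2 by omega]; exact hbt
              rcases h'' with h' | h'
              · left; omega
              · right; omega
            · by_cases c3 : j + 1 < t + i - 2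
              · have ea : g j = j+2 := by rw [hgdef]; split_ifs <;> omega
                have eb : g (j+1) = j+3 := by rw [hgdef]; split_ifs <;> omega
                rw [ea, eb]
                have h'' := hw (j+2) (by omega)
                rw [show j+2+1 = j+3 by omega] at h''
                exact h''
              · by_cases c4 : j + 1 = t + i - 2
                · have ea : g j = j+2 := by rw [hgdef]; split_ifs <;> omega
                  have eb : g (j+1) = j+5 := by rw [hgdef]; split_ifs <;> omega
                  rw [ea, eb]
                  have h'' := hw (t+i-1) (by omega)
                  rw [show t+i-1+1 = t+i by omega] at h''
                  have e1 : ℓ (j+2) = ℓ (t+i-1) := by rw [show j+2 = t+i-1 by omega]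
                  have e2 : ℓ (j+5) = ℓ (t+i+2) := by rw [show j+5 = t+i+2 by omega]
                  rcases h'' with h' | h'
                  · left; omega
                  · right; omega
                · have ea : g j = j+4 := by rw [hgdef]; split_ifs <;> omega
                  have eb : g (j+1) = j+5 := by rw [hgdef]; split_ifs <;> omega
                  rw [ea, eb]
                  have h'' := hw (j+4) (by omega)
                  rw [show j+4+1 = j+5 by omega] at h''
                  exact h''
        · -- repetitive property
          show xwW (ℓ (g j)) = xwW (ℓ (g (t-2+j)))
          by_cases c1 : j < i
          · have ea : g j = j := by rw [hgdef]; split_ifs <;> omega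
            have eb : g (t-2+j) = t+j := by rw [hgdef]; split_ifs <;> omega
            rw [ea, eb]
            exact hr j (by omega)
          · have ea : g j = j+2 := by rw [hgdef]; split_ifs <;> omega
            have eb : g (t-2+j) = t+j+2 := by rw [hgdef]; split_ifs <;> omega
            rw [ea, eb]
            have := hr (j+2) (by omega)
            rw [show t + (j+2) = t+j+2 by omega] at this
            exact this
      have keyi : ℓ i = ℓ (t+i) := by
        have key := bor' i (by omega)
        have ea : g i = i+2 := by rw [hgdef]; split_ifs <;> omega
        have eb : g (t-2+i) = t+i+2 := by rw [hgdef]; split_ifs <;> omega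
        rw [ea, eb, ← hbt, ← hbt2] at key
        exact key
      intro k hk
      by_cases ck1 : k < i
      · have key := bor' k (by omega)
        have ea : g k = k := by rw [hgdef]; split_ifs <;> omega
        have eb : g (t-2+k) = t+k := by rw [hgdef]; split_ifs <;> omega
        rw [ea, eb] at key
        exact key
      · by_cases ck2 : k = i
        · subst ck2; exact keyi
        · by_cases ck3 : k = i + 1
          · subst ck3
            have e := hr (i+1) (by omega)
            rw [show t+(i+1) = t+i+1 by omega] at e
            have s1 := hw i (by omega)
            have s2 := hw (t+i) (by omega)
            by_contra hne
            exact xwW_far e hne (by omega) (by omega)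
          · have key := bor' (k-2) (by omega)
            have ea : g (k-2) = k := by rw [hgdef]; split_ifs <;> omega
            have eb : g (t-2+(k-2)) = t+k := by rw [hgdef]; split_ifs <;> omega
            rw [ea, eb] at key
            exact key
    · by_cases hA2 : ∃ i, t ≤ i ∧ i + 3 ≤ 2*t ∧ ℓ i = ℓ (i+2)
      · exfalso
        obtain ⟨i, hti, hi3, hbt⟩ := hA2
        apply hA
        refine ⟨i - t, by omega, ?_⟩
        have c1 := hr (i-t) (by omega)
        have c2 := hr (i-t+2) (by omega)
        rw [show t + (i-t) = i by omega] at c1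
        rw [show t + (i-t+2) = i+2 by omega] at c2
        have e : xwW (ℓ (i-t)) = xwW (ℓ (i-t+2)) := by rw [c1, c2, hbt]
        by_contra hne
        have s1 := hw (i-t) (by omega)
        have s2 := hw (i-t+1) (by omega)
        rw [show i-t+1+1 = i-t+2 by omega] at s2
        exact xwW_far e hne (by omega) (by omega)
      · -- Case B : both halves strictly monotone
        push_neg at hA hA2
        have dir1 : ∀ j, j + 1 ≤ t - 2 →
            ((ℓ (j+1) = ℓ j + 1 ∧ ℓ (j+2) = ℓ (j+1) + 1) ∨
             (ℓ j = ℓ (j+1) + 1 ∧ ℓ (j+1) = ℓ (j+2) + 1)) := by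
          intro j hj
          have s1 := hw j (by omega)
          have s2 := hw (j+1) (by omega)
          have hb := hA j (by omega)
          rw [show j+1+1 = j+2 by omega] at s2
          rcases s1 with h1 | h1 <;> rcases s2 with h2 | h2
          · exact Or.inl ⟨h1, h2⟩
          · exact absurd (by omega : ℓ j = ℓ (j+2)) hb
          · exact absurd (by omega : ℓ j = ℓ (j+2)) hb
          · exact Or.inr ⟨h1, h2⟩
        have dir2 : ∀ j, j + 1 ≤ t - 2 →
            ((ℓ (t+j+1) = ℓ (t+j) + 1 ∧ ℓ (t+j+2) = ℓ (t+j+1) + 1) ∨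
             (ℓ (t+j) = ℓ (t+j+1) + 1 ∧ ℓ (t+j+1) = ℓ (t+j+2) + 1)) := by
          intro j hj
          have s1 := hw (t+j) (by omega)
          have s2 := hw (t+j+1) (by omega)
          have hb := hA2 (t+j) (by omega) (by omega)
          rw [show t+j+1+1 = t+j+2 by omega] at s2
          rcases s1 with h1 | h1 <;> rcases s2 with h2 | h2
          · exact Or.inl ⟨h1, h2⟩
          · exact absurd (by omega : ℓ (t+j) = ℓ (t+j+2)) hb
          · exact absurd (by omega : ℓ (t+j) = ℓ (t+j+2)) hb
          · exact Or.inr ⟨h1, h2⟩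
        have const1 : ∀ j, j ≤ t - 2 → (ℓ (j+1) = ℓ j + 1 ↔ ℓ 1 = ℓ 0 + 1) := by
          intro j
          induction j with
          | zero => intro _; simp
          | succ j IHj =>
            intro hj
            have e := IHj (by omega)
            rcases dir1 j (by omega) with ⟨d1, d2⟩ | ⟨d1, d2⟩
            · constructor
              · intro _; exact e.mp d1
              · intro _
                rw [show j+1+1 = j+2 by omega]
                exact d2
            · constructor
              · intro h'
                exfalso
                rw [show j+1+1 = j+2 by omega] at h'
                omega
              · intro h0
                exfalso
                have := e.mpr h0
                omega
        have const2 : ∀ j, j ≤ t - 2 → (ℓ (t+j+1) = ℓ (t+j) + 1 ↔ ℓ (t+1) = ℓ t + 1) := by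
          intro j
          induction j with
          | zero => intro _; simp
          | succ j IHj =>
            intro hj
            have e := IHj (by omega)
            rcases dir2 j (by omega) with ⟨d1, d2⟩ | ⟨d1, d2⟩
            · constructor
              · intro _; exact e.mp d1
              · intro _
                rw [show t+(j+1)+1 = t+j+2 by omega, show t+(j+1) = t+j+1 by omega]
                exact d2
            · constructor
              · intro h'
                exfalso
                rw [show t+(j+1)+1 = t+j+2 by omega, show t+(j+1) = t+j+1 by omega] at h'
                omega
              · intro h0
                exfalso
                have := e.mpr h0
                omega
        have hw0 : ℓ 1 = ℓ 0 + 1 ∨ ℓ 0 = ℓ 1 + 1 := by simpa using hw 0 (by omega)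
        have hwt : ℓ (t+1) = ℓ t + 1 ∨ ℓ t = ℓ (t+1) + 1 := hw t (by omega)
        have hjunc := hw (t-1) (by omega)
        rw [show t-1+1 = t by omega] at hjunc
        have Hfirst : (∀ i, i ≤ t-1 → ℓ i = ℓ 0 + i) ∨ (∀ i, i ≤ t-1 → ℓ i + i = ℓ 0) := by
          rcases hw0 with h0 | h0
          · left
            intro i
            induction i with
            | zero => intro _; simp
            | succ i IHi =>
              intro hi
              have e1 := IHi (by omega)
              have := (const1 i (by omega)).mpr h0
              omega
          · right
            intro i
            induction i with
            | zero => intro _; simp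
            | succ i IHi =>
              intro hi
              have e1 := IHi (by omega)
              have hnd : ¬ (ℓ (i+1) = ℓ i + 1) := by
                intro hd
                have := (const1 i (by omega)).mp hd
                omega
              rcases hw i (by omega) with h' | h'
              · exact absurd h' hnd
              · omega
        have Hsecond : (∀ i, i ≤ t-1 → ℓ (t+i) = ℓ t + i) ∨
            (∀ i, i ≤ t-1 → ℓ (t+i) + i = ℓ t) := by
          rcases hwt with h0 | h0
          · left
            intro i
            induction i with
            | zero => intro _; simp
            | succ i IHi =>
              intro hi
              have e1 := IHi (by omega)
              have := (const2 i (by omega)).mpr h0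
              rw [show t+(i+1) = t+i+1 by omega]
              omega
          · right
            intro i
            induction i with
            | zero => intro _; simp
            | succ i IHi =>
              intro hi
              have e1 := IHi (by omega)
              have hnd : ¬ (ℓ (t+i+1) = ℓ (t+i) + 1) := by
                intro hd
                have := (const2 i (by omega)).mp hd
                omega
              rcases hw (t+i) (by omega) with h' | h'
              · exact absurd h' hnd
              · rw [show t+(i+1) = t+i+1 by omega]
                omega
        rcases Hfirst with F | F <;> rcases Hsecond with G | G
        · -- up, up
          have hjF := F (t-1) (by omega)
          have E0 : ℓ t = ℓ 0 + t ∨ ℓ t + 2 = ℓ 0 + t := by rcases hjunc with h | h <;> omega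
          rcases E0 with hB | hB
          · exfalso
            apply xwW_squarefree (ℓ 0) t (by omega)
            intro j hj
            have e := hr j hj
            rw [F j (by omega), G j (by omega), hB] at e
            rw [show ℓ 0 + t + j = ℓ 0 + t + j from rfl]
            exact e
          · by_cases hBA : ℓ t = ℓ 0
            · intro k hk
              rw [F k (by omega), G k (by omega), hBA]
            · exfalso
              apply xwW_squarefree (ℓ 0) (t-2) (by omega)
              intro j hj
              have e := hr j (by omega)
              rw [F j (by omega), G j (by omega)] at e
              rw [show ℓ 0 + (t-2) + j = ℓ t + j by omega]
              exact e
        · -- up, down : always contradiction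
          exfalso
          have hjF := F (t-1) (by omega)
          have E0 : ℓ t = ℓ 0 + t ∨ ℓ t + 2 = ℓ 0 + t := by rcases hjunc with h | h <;> omega
          rcases Nat.even_or_odd t with ⟨e, he⟩ | ⟨e, he⟩
          · rcases E0 with hB | hB
            · have hri := hr (e-1) (by omega)
              have E1 := F (e-1) (by omega)
              have E2 := G (e-1) (by omega)
              exact xwW_far hri (by omega) (by omega) (by omega)
            · have hri := hr e (by omega)
              have E1 := F e (by omega)
              have E2 := G e (by omega)
              exact xwW_far hri (by omega) (by omega) (by omega)
          · have hri := hr e (by omega)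
            have E1 := F e (by omega)
            have E2 := G e (by omega)
            rcases E0 with hB | hB <;>
              exact xwW_far hri (by omega) (by omega) (by omega)
        · -- down, up : always contradiction
          exfalso
          have hjF := F (t-1) (by omega)
          have E0 : ℓ t + t = ℓ 0 + 2 ∨ ℓ t + t = ℓ 0 := by rcases hjunc with h | h <;> omega
          rcases Nat.even_or_odd t with ⟨e, he⟩ | ⟨e, he⟩
          · rcases E0 with hB | hB
            · have hri := hr e (by omega)
              have E1 := F e (by omega)
              have E2 := G e (by omega)
              exact xwW_far hri (by omega) (by omega) (by omega)
            · have hri := hr (e-1) (by omega)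
              have E1 := F (e-1) (by omega)
              have E2 := G (e-1) (by omega)
              exact xwW_far hri (by omega) (by omega) (by omega)
          · have hri := hr e (by omega)
            have E1 := F e (by omega)
            have E2 := G e (by omega)
            rcases E0 with hB | hB <;>
              exact xwW_far hri (by omega) (by omega) (by omega)
        · -- down, down
          have hjF := F (t-1) (by omega)
          have hGt := G (t-1) (by omega)
          have E0 : ℓ t + t = ℓ 0 + 2 ∨ ℓ t + t = ℓ 0 := by rcases hjunc with h | h <;> omega
          rcases E0 with hB | hB
          · by_cases hBA : ℓ t = ℓ 0
            · intro k hk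
              have e1 := F k (by omega)
              have e2 := G k (by omega)
              omega
            · exfalso
              apply xwW_squarefree (ℓ t - (t-1)) (t-2) (by omega)
              intro j hj
              have e := hr (t-1-j) (by omega)
              have E1 := F (t-1-j) (by omega)
              have E2 := G (t-1-j) (by omega)
              have e1 : ℓ (t + (t-1-j)) = ℓ t - (t-1) + j := by omega
              have e2 : ℓ (t-1-j) = ℓ t - (t-1) + (t-2) + j := by omega
              rw [e1, e2] at e
              exact e.symm
          · exfalso
            apply xwW_squarefree (ℓ t - (t-1)) t (by omega)
            intro j hj
            have e := hr (t-1-j) (by omega)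
            have E1 := F (t-1-j) (by omega)
            have E2 := G (t-1-j) (by omega)
            have e1 : ℓ (t + (t-1-j)) = ℓ t - (t-1) + j := by omega
            have e2 : ℓ (t-1-j) = ℓ t - (t-1) + t + j := by omega
            rw [e1, e2] at e
            exact e.symm

theorem tree_coloring {V : Type} [Fintype V] (T : SimpleGraph V) [DecidableRel T.Adj]
    (hT : T.IsTree) (hD : 1 ≤ T.maxDegree) :
    ∃ f : V → Fin 4 × Fin T.maxDegree,
      ∀ (t : ℕ) (v : ℕ → V), IsWalkSeq T (2*t) v →
        (∀ i < t, f (v i) = f (v (t+i))) → ∀ i < t, v i = v (t+i) := by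
  classical
  have hne : Nonempty V := hT.isConnected.nonempty
  obtain ⟨r⟩ := hne
  let P : ∀ v : V, T.Walk v r := fun v =>
    (Nonempty.some (hT.isConnected.preconnected v r)).bypass
  have hP : ∀ v, (P v).IsPath := fun v => SimpleGraph.Walk.bypass_isPath _
  let lev : V → ℕ := fun v => (P v).length
  let par : V → V := fun v => (P v).getVert 1
  have uniq : ∀ {a : V} (p q : T.Walk a r), p.IsPath → q.IsPath → p = q := by
    intro a p q hp hq
    have := (SimpleGraph.isAcyclic_iff_path_unique.mp hT.IsAcyclic)
      (⟨p, hp⟩ : T.Path a r) (⟨q, hq⟩ : T.Path a r)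
    exact congrArg Subtype.val this
  -- the two-sided support claim
  have claim : ∀ u w : V, T.Adj u w → w ∈ (P u).support → u ∈ (P w).support → False := by
    intro u w huw h1 h2
    have hD' : (P w).dropUntil u h2 = P u :=
      uniq _ _ ((hP w).dropUntil h2) (hP u)
    have hspec := SimpleGraph.Walk.take_spec (P w) h2
    have hsup : (P w).support =
        ((P w).takeUntil u h2).support ++ ((P w).dropUntil u h2).support.tail := by
      conv_lhs => rw [← hspec]
      exact SimpleGraph.Walk.support_append _ _
    have hnodup : (P w).support.Nodup := (hP w).support_nodup
    rw [hsup] at hnodup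
    have hwtake : w ∈ ((P w).takeUntil u h2).support := SimpleGraph.Walk.start_mem_support _
    have hwdrop : w ∈ ((P w).dropUntil u h2).support := by rw [hD']; exact h1
    have hcons := SimpleGraph.Walk.support_eq_cons ((P w).dropUntil u h2)
    have : w ∈ ((P w).dropUntil u h2).support.tail := by
      rcases List.mem_cons.mp (by rw [← hcons]; exact hwdrop) with h | h
      · exact absurd h huw.ne'
      · exact h
    exact (List.disjoint_of_nodup_append hnodup) hwtake this
  -- the master lemma
  have master : ∀ a b : V, T.Adj a b →
      (lev b = lev a + 1 ∧ par b = a) ∨ (lev a = lev b + 1 ∧ par a = b) := by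
    intro a b hab
    by_cases hb : b ∈ (P a).support
    · -- then a ∉ (P b).support and P a = cons hab (P b)
      have ha : a ∉ (P b).support := fun ha => claim a b hab hb ha
      have hpath : (SimpleGraph.Walk.cons hab (P b)).IsPath := (hP b).cons ha
      have heq : P a = SimpleGraph.Walk.cons hab (P b) := uniq _ _ (hP a) hpath
      right
      constructor
      · show (P a).length = (P b).length + 1
        rw [heq]; rfl
      · show (P a).getVert 1 = b
        rw [heq]
        rw [SimpleGraph.Walk.getVert_cons_succ (P b) hab]
        exact SimpleGraph.Walk.getVert_zero _
    · have hpath : (SimpleGraph.Walk.cons hab.symm (P a)).IsPath := (hP a).cons hb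
      have heq : P b = SimpleGraph.Walk.cons hab.symm (P a) := uniq _ _ (hP b) hpath
      left
      constructor
      · show (P b).length = (P a).length + 1
        rw [heq]; rfl
      · show (P b).getVert 1 = a
        rw [heq]
        rw [SimpleGraph.Walk.getVert_cons_succ (P a) hab.symm]
        exact SimpleGraph.Walk.getVert_zero _
  -- children
  let children : V → Finset V :=
    fun u => Finset.univ.filter (fun w => T.Adj u w ∧ lev w = lev u + 1)
  have children_mem : ∀ u w, w ∈ children u ↔ (T.Adj u w ∧ lev w = lev u + 1) := by
    intro u w
    simp [children]
  have children_card : ∀ u, (children u).card ≤ T.maxDegree := by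
    intro u
    have hsub : children u ⊆ T.neighborFinset u := by
      intro w hw
      rw [SimpleGraph.mem_neighborFinset]
      exact ((children_mem u w).mp hw).1
    calc (children u).card ≤ (T.neighborFinset u).card := Finset.card_le_card hsub
    _ = T.degree u := T.card_neighborFinset_eq_degree u
    _ ≤ T.maxDegree := T.degree_le_maxDegree u
  -- sibling labels
  let chi : V → V → Fin T.maxDegree := fun u v =>
    if h : v ∈ children u then
      Fin.castLE (children_card u) ((children u).equivFin ⟨v, h⟩)
    else ⟨0, hD⟩
  have chi_inj : ∀ u a b, a ∈ children u → b ∈ children u → chi u a = chi u b → a = b := by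
    intro u a b ha hb heq
    have e1 : chi u a = Fin.castLE (children_card u) ((children u).equivFin ⟨a, ha⟩) :=
      dif_pos ha
    have e2 : chi u b = Fin.castLE (children_card u) ((children u).equivFin ⟨b, hb⟩) :=
      dif_pos hb
    rw [e1, e2] at heq
    have h2 := Fin.castLE_injective (children_card u) heq
    have h3 := (children u).equivFin.injective h2
    exact congrArg Subtype.val h3
  let s : V → Fin T.maxDegree := fun v => chi (par v) v
  -- the colouring
  refine ⟨fun v => (⟨xwW (lev v), xwW_lt _⟩, s v), ?_⟩
  intro t w hwalk hrep
  rcases Nat.eq_zero_or_pos t with rfl | ht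
  · intro i hi; exact absurd hi (by omega)
  have hx : ∀ i < t, xwW (lev (w i)) = xwW (lev (w (t+i))) := by
    intro i hi
    have := congrArg (fun p => (Prod.fst p).val) (hrep i hi)
    simpa using this
  have hs : ∀ i < t, s (w i) = s (w (t+i)) := by
    intro i hi
    have := congrArg Prod.snd (hrep i hi)
    simpa using this
  have hl : ∀ i, i + 1 < 2*t →
      (lev (w (i+1)) = lev (w i) + 1 ∨ lev (w i) = lev (w (i+1)) + 1) := by
    intro i hi
    rcases master (w i) (w (i+1)) (hwalk i hi) with ⟨h1, _⟩ | ⟨h1, _⟩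
    · exact Or.inl h1
    · exact Or.inr h1
  have hlev : ∀ i < t, lev (w i) = lev (w (t+i)) :=
    xwW_walk t (fun i => lev (w i)) hl hx
  -- the anchor : minimum level
  obtain ⟨jm, hjmem, hjmin⟩ := Finset.exists_min_image (Finset.range (2*t))
    (fun i => lev (w i)) ⟨0, by simp; omega⟩
  have hjm2t : jm < 2*t := Finset.mem_range.mp hjmem
  have hmin : ∀ i, i < 2*t → lev (w (if jm < t then jm else jm - t)) ≤ lev (w i) := by
    intro i hi
    have := hjmin i (Finset.mem_range.mpr hi)
    by_cases hc : jm < t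
    · rw [if_pos hc]; exact this
    · rw [if_neg hc]
      have := hlev (jm - t) (by omega)
      rw [show t + (jm - t) = jm by omega] at this
      rw [this]
      exact hjmin i (Finset.mem_range.mpr hi)
  set j0 := if jm < t then jm else jm - t with hj0def
  have hj0t : j0 < t := by rw [hj0def]; split <;> omega
  set M := lev (w j0) with hMdef
  -- parent-iterate invariant along the walk from j0 to t+j0
  have inv : ∀ k, k ≤ t → par^[lev (w (j0+k)) - M] (w (j0+k)) = w j0 := by
    intro k
    induction k with
    | zero =>
      intro _
      simp [hMdef]
    | succ k IHk =>
      intro hk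
      have IH := IHk (by omega)
      have hadj := hwalk (j0+k) (by omega)
      have hm1 : M ≤ lev (w (j0+k)) := hmin (j0+k) (by omega)
      have hm2 : M ≤ lev (w (j0+k+1)) := hmin (j0+k+1) (by omega)
      have hind : j0 + (k+1) = j0 + k + 1 := by omega
      rw [hind]
      rcases master (w (j0+k)) (w (j0+k+1)) hadj with ⟨h1, h2⟩ | ⟨h1, h2⟩
      · -- up step : parent of w (j0+k+1) is w (j0+k)
        rw [h1, show lev (w (j0+k)) + 1 - M = (lev (w (j0+k)) - M) + 1 by omega,
          Function.iterate_succ_apply, h2]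
        exact IH
      · -- down step
        rw [h1, show lev (w (j0+k+1)) + 1 - M = (lev (w (j0+k+1)) - M) + 1 by omega,
          Function.iterate_succ_apply, h2] at IH
        exact IH
  have key0 : w j0 = w (t + j0) := by
    have h1 := inv t (le_refl t)
    have h2 : lev (w (j0 + t)) = M := by
      have := hlev j0 hj0t
      rw [show t + j0 = j0 + t by omega] at this
      rw [← this]
    rw [h2] at h1
    simp at h1
    rw [show t + j0 = j0 + t by omega]
    exact h1.symm
  -- propagation forward
  have forward : ∀ m, j0 + m < t → w (j0+m) = w (t+(j0+m)) := by
    intro m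
    induction m with
    | zero => intro _; simpa using key0
    | succ m IHm =>
      intro hm
      have IH := IHm (by omega)
      set i := j0 + m with hidef
      have hi1 : i + 1 < t := by omega
      have a1 := hwalk i (by omega)
      have a2 := hwalk (t+i) (by omega)
      have e1 := hlev i (by omega)
      have e2 := hlev (i+1) (by omega)
      rw [show t+(i+1) = t+i+1 by omega] at e2
      have hss := hs (i+1) (by omega)
      rw [show t+(i+1) = t+i+1 by omega] at hss
      rw [show j0 + (m+1) = i + 1 by omega, show t+(i+1) = t+i+1 by omega]
      rcases master (w i) (w (i+1)) a1 with ⟨h1, h2⟩ | ⟨h1, h2⟩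
      · -- up step
        rcases master (w (t+i)) (w (t+i+1)) a2 with ⟨g1, g2⟩ | ⟨g1, g2⟩
        · -- both up; use sibling labels
          have hca : w (i+1) ∈ children (w i) :=
            (children_mem _ _).mpr ⟨a1, h1⟩
          have hcb : w (t+i+1) ∈ children (w i) := by
            refine (children_mem _ _).mpr ⟨?_, ?_⟩
            · rw [IH]; exact a2
            · omega
          have hsa : s (w (i+1)) = chi (w i) (w (i+1)) := by
            show chi (par (w (i+1))) (w (i+1)) = _
            rw [h2]
          have hsb : s (w (t+i+1)) = chi (w i) (w (t+i+1)) := by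
            show chi (par (w (t+i+1))) (w (t+i+1)) = _
            rw [g2, ← IH]
          exact chi_inj (w i) _ _ hca hcb (by rw [← hsa, ← hsb]; exact hss)
        · omega
      · -- down step
        rcases master (w (t+i)) (w (t+i+1)) a2 with ⟨g1, g2⟩ | ⟨g1, g2⟩
        · omega
        · rw [← h2, ← g2, IH]
  -- propagation backward
  have backward : ∀ m, m ≤ j0 → w (j0-m) = w (t+(j0-m)) := by
    intro m
    induction m with
    | zero => intro _; simpa using key0
    | succ m IHm =>
      intro hm
      have IH := IHm (by omega)
      set i := j0 - (m+1) with hidef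
      have hip : i + 1 = j0 - m := by omega
      have hi1 : i + 1 < t := by omega
      rw [← hip] at IH
      rw [show t + (i+1) = t+i+1 by omega] at IH
      have a1 := hwalk i (by omega)
      have a2 := hwalk (t+i) (by omega)
      have e1 := hlev i (by omega)
      have e2 := hlev (i+1) (by omega)
      rw [show t+(i+1) = t+i+1 by omega] at e2
      have hss := hs i (by omega)
      rcases master (w i) (w (i+1)) a1 with ⟨h1, h2⟩ | ⟨h1, h2⟩
      · -- up step : w i = par (w (i+1))
        rcases master (w (t+i)) (w (t+i+1)) a2 with ⟨g1, g2⟩ | ⟨g1, g2⟩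
        · rw [← h2, ← g2, IH]
        · omega
      · -- down step : w i is a child of w (i+1)
        rcases master (w (t+i)) (w (t+i+1)) a2 with ⟨g1, g2⟩ | ⟨g1, g2⟩
        · omega
        · have hca : w i ∈ children (w (i+1)) :=
            (children_mem _ _).mpr ⟨a1.symm, h1⟩
          have hcb : w (t+i) ∈ children (w (i+1)) := by
            refine (children_mem _ _).mpr ⟨?_, ?_⟩
            · rw [IH]; exact a2.symm
            · omega
          have hsa : s (w i) = chi (w (i+1)) (w i) := by
            show chi (par (w i)) (w i) = _
            rw [h2]
          have hsb : s (w (t+i)) = chi (w (i+1)) (w (t+i)) := by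
            show chi (par (w (t+i))) (w (t+i)) = _
            rw [g2, ← IH]
          exact chi_inj (w (i+1)) _ _ hca hcb (by rw [← hsa, ← hsb]; exact hss)
  intro i hi
  rcases le_or_gt i j0 with hc | hc
  · have := backward (j0 - i) (by omega)
    rw [show j0 - (j0 - i) = i by omega] at this
    exact this
  · have := forward (i - j0) (by omega)
    rw [show j0 + (i - j0) = i by omega] at this
    exact this

lemma wnr_proper {V C : Type} {G : SimpleGraph V} {g : V → C} (hg : WalkNonrepetitive G g)
    {a b : V} (hab : G.Adj a b) : g a ≠ g b := by
  intro hgeq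
  have hbor := hg 1 (fun i => if i = 0 then a else b)
    (by intro i hi
        have hi0 : i = 0 := by omega
        subst hi0
        simpa using hab)
    (by intro i hi
        have hi0 : i = 0 := by omega
        subst hi0
        simpa using hgeq)
  have := hbor 0 (by omega)
  simp at this
  exact hab.ne this

lemma wnr_dist2 {V C : Type} {G : SimpleGraph V} {g : V → C} (hg : WalkNonrepetitive G g)
    {a b c : V} (h1 : G.Adj c a) (h2 : G.Adj c b) (hne : a ≠ b) : g a ≠ g b := by
  intro hgeq
  have hbor := hg 2 (fun i => if i = 0 then a else if i = 2 then b else c)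
    (by intro i hi
        have hi3 : i = 0 ∨ i = 1 ∨ i = 2 := by omega
        rcases hi3 with rfl | rfl | rfl
        · simpa using h1.symm
        · simpa using h2
        · simpa using h2.symm)
    (by intro i hi
        have hi2 : i = 0 ∨ i = 1 := by omega
        rcases hi2 with rfl | rfl
        · simpa using hgeq
        · simp)
  have := hbor 0 (by omega)
  simp at this
  exact hne this

/-- Every tree `T` with at least one edge satisfies `Δ(T) + 1 ≤ σ(T) ≤ 4Δ(T)`. -/
theorem stmt7 {V : Type} [Fintype V] (T : SimpleGraph V) [DecidableRel T.Adj]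
    (hT : T.IsTree) (he : T.edgeSet.Nonempty) :
    T.maxDegree + 1 ≤ sigmaNR T ∧ sigmaNR T ≤ 4 * T.maxDegree := by
  classical
  obtain ⟨e, heE⟩ := he
  have hD1 : 1 ≤ T.maxDegree := by
    induction e using Sym2.ind with
    | _ a b =>
      rw [SimpleGraph.mem_edgeSet] at heE
      have h1 : 0 < T.degree a := by
        rw [SimpleGraph.degree_pos_iff_exists_adj]
        exact ⟨b, heE⟩
      have h2 := T.degree_le_maxDegree a
      omega
  obtain ⟨f0, hf0⟩ := tree_coloring T hT hD1
  have hmem : (4 * T.maxDegree) ∈ {k | ∃ f : V → Fin k, WalkNonrepetitive T f} := by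
    refine ⟨fun v => finProdFinEquiv (f0 v), ?_⟩
    intro t v hwalk hrep
    apply hf0 t v hwalk
    intro i hi
    exact finProdFinEquiv.injective (hrep i hi)
  constructor
  · -- lower bound
    obtain ⟨g, hg⟩ := Nat.sInf_mem (⟨4 * T.maxDegree, hmem⟩ :
      Set.Nonempty {k | ∃ f : V → Fin k, WalkNonrepetitive T f})
    haveI : Nonempty V := hT.isConnected.nonempty
    obtain ⟨vm, hvm⟩ := T.exists_maximal_degree_vertex
    set A : Finset V := insert vm (T.neighborFinset vm) with hA
    have hcard : A.card = T.maxDegree + 1 := by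
      rw [hA, Finset.card_insert_of_notMem (T.notMem_neighborFinset_self vm),
        T.card_neighborFinset_eq_degree, ← hvm]
    have hinj : Set.InjOn g A := by
      intro x hx y hy hxy
      by_contra hne
      simp only [hA, Finset.coe_insert, Set.mem_insert_iff, Finset.mem_coe,
        SimpleGraph.mem_neighborFinset] at hx hy
      rcases hx with rfl | hx <;> rcases hy with rfl | hy
      · exact hne rfl
      · exact wnr_proper hg hy hxy
      · exact wnr_proper hg hx hxy.symm
      · exact wnr_dist2 hg hx hy hne hxy
    have hle : A.card ≤ Fintype.card
        (Fin (sInf {k | ∃ f : V → Fin k, WalkNonrepetitive T f})) := by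
      calc A.card = (A.image g).card := (Finset.card_image_of_injOn hinj).symm
      _ ≤ _ := Finset.card_le_univ _
    rw [hcard, Fintype.card_fin] at hle
    exact hle
  · exact Nat.sInf_le hmem
end

section
/- Let G be a graph with a tree-partition in which every bag has at most ℓ vertices. Then G is a subgraph of a graph G′ that has a shadow-complete levelling λ in which every level satisfies π(G′_{λ=k}) ≤ σ(G′_{λ=k}) ≤ ℓ. -/
open SimpleGraph

noncomputable def rtX {B : Type} (F : SimpleGraph B) (x : B) : B :=
  Quot.out (F.connectedComponentMk x)

noncomputable def depX {B : Type} (F : SimpleGraph B) (x : B) : ℕ :=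
  F.dist (rtX F x) x

lemma reach_rt {B : Type} (F : SimpleGraph B) (x : B) : F.Reachable (rtX F x) x :=
  ConnectedComponent.exact (Quot.out_eq _)

lemma rt_adj {B : Type} (F : SimpleGraph B) {x y : B} (h : F.Adj x y) :
    rtX F x = rtX F y :=
  congrArg Quot.out (ConnectedComponent.sound h.reachable)

lemma dep_le {B : Type} (F : SimpleGraph B) {x y : B} (h : F.Adj x y) :
    depX F y ≤ depX F x + 1 := by
  obtain ⟨p, hp⟩ := (reach_rt F x).exists_walk_length_eq_dist
  have h1 : F.dist (rtX F x) y ≤ (p.concat h).length := dist_le _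
  rw [Walk.length_concat, hp] at h1
  have h2 : depX F y = F.dist (rtX F x) y := by
    rw [depX, rt_adj F h]
  rw [h2]
  exact h1

lemma concat_path {B : Type} {F : SimpleGraph B} {u v w : B} {p : F.Walk u v}
    (hp : p.IsPath) (h : F.Adj v w) (hw : w ∉ p.support) : (p.concat h).IsPath := by
  rw [← Walk.isPath_reverse_iff, Walk.reverse_concat]
  exact ((Walk.isPath_reverse_iff p).mpr hp).cons
    (by rwa [Walk.support_reverse, List.mem_reverse])

lemma dep_ne {B : Type} {F : SimpleGraph B} (hac : F.IsAcyclic) {x y : B}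
    (h : F.Adj x y) : depX F x ≠ depX F y := by
  classical
  intro he
  have hpu := isAcyclic_iff_path_unique.mp hac
  have hroot : rtX F x = rtX F y := rt_adj F h
  obtain ⟨p1, hp1, hl1⟩ := (reach_rt F x).exists_path_of_dist
  by_cases hy : y ∈ p1.support
  · have hdrop : (p1.dropUntil y hy).IsPath := hp1.dropUntil hy
    have huniq := hpu ⟨p1.dropUntil y hy, hdrop⟩ (Path.singleton h.symm)
    have hlen1 : (p1.dropUntil y hy).length = 1 := by
      have := congrArg (fun q : F.Path y x => q.1.length) huniq
      simpa [Path.singleton] using this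
    have hsum := congrArg Walk.length (p1.take_spec hy)
    rw [Walk.length_append] at hsum
    have hdy : F.dist (rtX F x) y ≤ (p1.takeUntil y hy).length := dist_le _
    have hdy2 : depX F y = F.dist (rtX F x) y := by rw [depX, hroot]
    have hdx : depX F x = F.dist (rtX F x) x := rfl
    omega
  · have hconc : (p1.concat h).IsPath := concat_path hp1 h hy
    have hry : F.Reachable (rtX F x) y := by
      rw [hroot]; exact reach_rt F y
    obtain ⟨p2, hp2, hl2⟩ := hry.exists_path_of_dist
    have huniq := hpu ⟨p1.concat h, hconc⟩ ⟨p2, hp2⟩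
    have hlen := congrArg (fun q : F.Path (rtX F x) y => q.1.length) huniq
    simp only [Walk.length_concat] at hlen
    have hdy2 : depX F y = F.dist (rtX F x) y := by rw [depX, hroot]
    have hdx : depX F x = F.dist (rtX F x) x := rfl
    omega

lemma parent_exists {B : Type} (F : SimpleGraph B) {x : B} (h0 : 0 < depX F x) :
    ∃ v, F.Adj x v ∧ depX F v + 1 = depX F x := by
  obtain ⟨p, hl⟩ := (reach_rt F x).exists_walk_length_eq_dist
  have hne : x ≠ rtX F x := by
    intro he
    have : depX F x = 0 := by
      rw [depX, ← he]; exact SimpleGraph.dist_self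
    omega
  obtain ⟨v, ha, q, hq⟩ := Walk.exists_eq_cons_of_ne hne p.reverse
  have hlen : q.length + 1 = depX F x := by
    have := congrArg Walk.length hq
    rw [Walk.length_reverse, Walk.length_cons, hl] at this
    have hdx : depX F x = F.dist (rtX F x) x := rfl
    omega
  have hr : rtX F v = rtX F x := (rt_adj F ha).symm
  have hdv : depX F v ≤ q.length := by
    calc depX F v = F.dist (rtX F x) v := by rw [depX, hr]
      _ ≤ q.reverse.length := dist_le q.reverse
      _ = q.length := Walk.length_reverse q
  have hxv : depX F x ≤ depX F v + 1 := dep_le F ha.symm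
  exact ⟨v, ha, by omega⟩

lemma parent_unique {B : Type} {F : SimpleGraph B} (hac : F.IsAcyclic) {z1 z2 x : B}
    (h1 : F.Adj z1 x) (h2 : F.Adj z2 x)
    (hd1 : depX F z1 + 1 = depX F x) (hd2 : depX F z2 + 1 = depX F x) : z1 = z2 := by
  classical
  have hpu := isAcyclic_iff_path_unique.mp hac
  have hr1 : rtX F z1 = rtX F x := rt_adj F h1
  have hr2 : rtX F z2 = rtX F x := rt_adj F h2
  have hrz1 : F.Reachable (rtX F x) z1 := by rw [← hr1]; exact reach_rt F z1
  have hrz2 : F.Reachable (rtX F x) z2 := by rw [← hr2]; exact reach_rt F z2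
  have hdz1 : F.dist (rtX F x) z1 = depX F z1 := by rw [depX, hr1]
  have hdz2 : F.dist (rtX F x) z2 = depX F z2 := by rw [depX, hr2]
  obtain ⟨p1, hp1, hl1⟩ := hrz1.exists_path_of_dist
  obtain ⟨p2, hp2, hl2⟩ := hrz2.exists_path_of_dist
  have hdx : depX F x = F.dist (rtX F x) x := rfl
  have hx1 : x ∉ p1.support := by
    intro hx
    have ha := dist_le (p1.takeUntil x hx)
    have hb := Walk.length_takeUntil_le p1 hx
    omega
  have hx2 : x ∉ p2.support := by
    intro hx
    have ha := dist_le (p2.takeUntil x hx)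
    have hb := Walk.length_takeUntil_le p2 hx
    omega
  have huniq := hpu ⟨p1.concat h1, concat_path hp1 h1 hx1⟩ ⟨p2.concat h2, concat_path hp2 h2 hx2⟩
  have hw : p1.concat h1 = p2.concat h2 := congrArg Subtype.val huniq
  have hw2 := congrArg Walk.reverse hw
  rw [Walk.reverse_concat, Walk.reverse_concat] at hw2
  injection hw2

noncomputable def parX {B : Type} (F : SimpleGraph B) (x : B) : B :=
  if h : 0 < depX F x then (parent_exists F h).choose else x

lemma par_spec {B : Type} (F : SimpleGraph B) {x : B} (h : 0 < depX F x) :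
    F.Adj x (parX F x) ∧ depX F (parX F x) + 1 = depX F x := by
  rw [parX, dif_pos h]
  exact (parent_exists F h).choose_spec

lemma par_step {B : Type} {F : SimpleGraph B} (hac : F.IsAcyclic) {x y : B}
    (h : F.Adj x y) (hd : depX F y = depX F x + 1) : parX F y = x := by
  have h0 : 0 < depX F y := by omega
  obtain ⟨ha, hd'⟩ := par_spec F h0
  exact parent_unique hac ha.symm h (by omega) (by omega)

lemma anc_step {B : Type} {F : SimpleGraph B} (hac : F.IsAcyclic) {x y : B} {m : ℕ}
    (h : F.Adj x y) (hx : m + 1 ≤ depX F x) (hy : m + 1 ≤ depX F y) :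
    (parX F)^[depX F x - (m+1)] x = (parX F)^[depX F y - (m+1)] y := by
  have hne := dep_ne hac h
  have h1 := dep_le F h
  have h2 := dep_le F h.symm
  have hcase : depX F y = depX F x + 1 ∨ depX F x = depX F y + 1 := by omega
  rcases hcase with hc | hc
  · have hstep := par_step hac h hc
    have he : depX F y - (m+1) = (depX F x - (m+1)) + 1 := by omega
    rw [he, Function.iterate_succ_apply, hstep]
  · have hstep := par_step hac h.symm hc
    have he : depX F x - (m+1) = (depX F y - (m+1)) + 1 := by omega
    rw [he, Function.iterate_succ_apply, hstep]

lemma walkNR_path {V C : Type} {G : SimpleGraph V} {f : V → C}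
    (h : WalkNonrepetitive G f) : PathNonrepetitive G f := by
  intro t v ht hp hrep
  have hb := h t v hp.1 hrep 0 ht
  have := hp.2 0 (by omega) (t + 0) (by omega) hb
  omega

lemma piNR_le_sigmaNR {V : Type} [Finite V] (G : SimpleGraph V) :
    piNR G ≤ sigmaNR G := by
  have hne : {k | ∃ f : V → Fin k, WalkNonrepetitive G f}.Nonempty := by
    obtain ⟨n, ⟨e⟩⟩ := Finite.exists_equiv_fin V
    exact ⟨n, e, fun t v hw hrep i hi => e.injective (hrep i hi)⟩
  obtain ⟨f, hf⟩ := Nat.sInf_mem hne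
  exact Nat.sInf_le ⟨f, walkNR_path hf⟩

@[reducible]
def bagGraph {V B : Type} (F : SimpleGraph B) (b : V → B) : SimpleGraph V where
  Adj u w := u ≠ w ∧ (b u = b w ∨ F.Adj (b u) (b w))
  symm := by
    constructor
    rintro u w ⟨h1, h2⟩
    exact ⟨h1.symm, h2.imp Eq.symm F.adj_symm⟩
  loopless := by constructor; rintro u ⟨h, -⟩; exact h rfl

/-- If `G` has a tree-partition in which every bag has at most `ℓ` vertices, then `G` is a
subgraph of a graph `G'` that has a shadow-complete levelling in which every level satisfies
`π(G'_{λ=k}) ≤ σ(G'_{λ=k}) ≤ ℓ`. -/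
theorem stmt10 {V : Type} [Fintype V] (G : SimpleGraph V) (ℓ : ℕ)
    (h : HasTreePartition G ℓ) :
    ∃ G' : SimpleGraph V, G ≤ G' ∧ ∃ lam : V → ℤ, IsLevelling G' lam ∧
      ShadowComplete G' lam ∧
      ∀ k : ℤ, piNR (G'.induce {v : V | lam v = k}) ≤ sigmaNR (G'.induce {v : V | lam v = k}) ∧
        sigmaNR (G'.induce {v : V | lam v = k}) ≤ ℓ := by
  classical
  obtain ⟨B, F, b, hac, hadj, hbag⟩ := h
  refine ⟨bagGraph F b, ?_, fun v => (depX F (b v) : ℤ), ?_, ?_, ?_⟩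
  · intro u w huw
    exact ⟨huw.ne, hadj u w huw⟩
  · -- levelling
    intro u w huw
    obtain ⟨-, hc⟩ := huw
    show |((depX F (b u) : ℕ) : ℤ) - ((depX F (b w) : ℕ) : ℤ)| ≤ 1
    rw [abs_sub_le_iff]
    rcases hc with hc | hc
    · rw [hc]; omega
    · have h1 := dep_le F hc
      have h2 := dep_le F hc.symm
      constructor <;> omega
  · -- shadow complete
    intro k u w hu hw hex
    obtain ⟨x, y, hux, hwy, hxy⟩ := hex
    have hk : ((depX F (b u) : ℕ) : ℤ) = k := hu
    have hw' : ((depX F (b w) : ℕ) : ℤ) = k := hw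
    have hwm : depX F (b w) = depX F (b u) := by omega
    obtain ⟨hneux, hcux⟩ := hux
    have hxS : k < ((depX F (b x.1) : ℕ) : ℤ) := x.2
    have hFux : F.Adj (b u) (b x.1) := by
      rcases hcux with hc | hc
      · exfalso; rw [hc] at hk; omega
      · exact hc
    have hdx1 : depX F (b x.1) = depX F (b u) + 1 := by
      have h1 := dep_le F hFux
      omega
    obtain ⟨hnewy, hcwy⟩ := hwy
    have hyS : k < ((depX F (b y.1) : ℕ) : ℤ) := y.2
    have hFwy : F.Adj (b w) (b y.1) := by
      rcases hcwy with hc | hc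
      · exfalso; rw [hc] at hw'; omega
      · exact hc
    have hdy1 : depX F (b y.1) = depX F (b u) + 1 := by
      have h1 := dep_le F hFwy
      omega
    have key : ∀ (a c : {v : V | k < ((depX F (b v) : ℕ) : ℤ)})
        (_ : ((bagGraph F b).induce {v : V | k < ((depX F (b v) : ℕ) : ℤ)}).Walk a c),
        (parX F)^[depX F (b a.1) - (depX F (b u) + 1)] (b a.1) =
          (parX F)^[depX F (b c.1) - (depX F (b u) + 1)] (b c.1) := by
      intro a c p
      induction p with
      | nil => rfl
      | @cons a a' c had p ih =>
        refine Eq.trans ?_ ih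
        have had' : (bagGraph F b).Adj a.1 a'.1 := had
        obtain ⟨hne, hc⟩ := had'
        rcases hc with hc | hc
        · rw [hc]
        · have h2 : k < ((depX F (b a.1) : ℕ) : ℤ) := a.2
          have h2' : k < ((depX F (b a'.1) : ℕ) : ℤ) := a'.2
          have hda : depX F (b u) + 1 ≤ depX F (b a.1) := by omega
          have hda' : depX F (b u) + 1 ≤ depX F (b a'.1) := by omega
          exact anc_step hac hc hda hda'
    obtain ⟨p⟩ := hxy
    have hxyb := key x y p
    rw [hdx1, hdy1] at hxyb
    simp only [Nat.add_sub_cancel, Nat.sub_self, Function.iterate_zero, id] at hxyb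
    have hbuw : b u = b w := by
      refine parent_unique hac hFux ?_ (by omega) (by omega)
      rw [hxyb]
      exact hFwy
    by_cases huw : u = w
    · exact Or.inl huw
    · exact Or.inr ⟨huw, Or.inl hbuw⟩
  · -- levels
    intro k
    have hfin : ∀ x : B, ({v : V | b v = x}).Finite := fun x => Set.toFinite _
    have hsig : sigmaNR ((bagGraph F b).induce {v : V | ((depX F (b v) : ℕ) : ℤ) = k}) ≤ ℓ := by
      set L : B → List V := fun x => (hfin x).toFinset.toList with hL
      have hmem : ∀ v : V, v ∈ L (b v) := fun v => by
        simp [hL, Set.Finite.mem_toFinset]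
      have hlen : ∀ x, (L x).length ≤ ℓ := fun x => by
        rw [hL]
        simp only [Finset.length_toList]
        rw [← Set.ncard_eq_toFinset_card]
        exact hbag x
      apply Nat.sInf_le
      refine ⟨fun v => ⟨(L (b v.1)).idxOf v.1,
        lt_of_lt_of_le (List.idxOf_lt_length_iff.mpr (hmem v.1)) (hlen _)⟩, ?_⟩
      intro t v hwk hrep
      have hbb : ∀ j, j < 2*t → b (v j).1 = b (v 0).1 := by
        intro j
        induction j with
        | zero => intro _; rfl
        | succ n ih =>
          intro hj
          have hadj' : (bagGraph F b).Adj (v n).1 (v (n+1)).1 := hwk n (by omega)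
          obtain ⟨hne, hc⟩ := hadj'
          rcases hc with hc | hc
          · rw [← hc]; exact ih (by omega)
          · exfalso
            apply dep_ne hac hc
            have h1 : ((depX F (b (v n).1) : ℕ) : ℤ) = k := (v n).2
            have h2 : ((depX F (b (v (n+1)).1) : ℕ) : ℤ) = k := (v (n+1)).2
            omega
      intro i hi
      have hfi := hrep i hi
      have hb1 : b (v i).1 = b (v 0).1 := hbb i (by omega)
      have hb2 : b (v (t+i)).1 = b (v 0).1 := hbb (t+i) (by omega)
      have hidx : (L (b (v 0).1)).idxOf (v i).1 = (L (b (v 0).1)).idxOf (v (t+i)).1 := by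
        have hfv := congrArg Fin.val hfi
        simpa [hb1, hb2] using hfv
      have hmem1 : (v i).1 ∈ L (b (v 0).1) := by rw [← hb1]; exact hmem _
      have hmem2 : (v (t+i)).1 ∈ L (b (v 0).1) := by rw [← hb2]; exact hmem _
      exact Subtype.ext ((List.idxOf_inj hmem1).mp hidx)
    exact ⟨piNR_le_sigmaNR _, hsig⟩
end
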